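/- arXiv:2008.01801 — 8 statements merged into one kernel-verified Lean document; each statement's English description precedes it below -/
import Mathlib

section
/- Let V ⊆ L²(μ) be a closed subspace, Q : L²(μ) → L²(μ) the orthogonal projection onto V, and C : L²(μ) → L²(μ) a continuous self-adjoint linear operator whose range is contained in V. Assume: (ellipticity) there exist reals 0 < a ≤ b with a·‖v‖₂² ≤ ⟨Cv, v⟩ ≤ b·‖v‖₂² for all v ∈ V; (locality) for every L ⊆ 𝒯 and every v ∈ L²(μ) vanishing μ-a.e. outside ⋃_{T∈L} A_T, the function Cv vanishes μ-a.e. outside ⋃_{T : δ(T,L) ≤ 1} A_T, where δ(T,L) := min_{T'∈L} δ(T,T'). Set q := (√(b/a) − 1)/(√(b/a) + 1). Then for all nonempty L, L' ⊆ 𝒯 with N := δ(L,L') ≥ 1 and all u ∈ L²(μ): ‖1_L · Q(1_{L'} · u)‖₂ ≤ (2·q^{N−1}/(1 + q^{2(N−1)}))·‖1_{L'} · u‖₂; in particular ‖1_L · Q(1_{L'} · u)‖₂ ≤ min{2·q^{N−1}, 1}·‖1_{L'} · u‖₂. -/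
/-!
Put `w = 1_{L'} u` and `g = Q w`. Since `C` is self-adjoint with range in `V`, `C g = C w`, so
for every polynomial `r` with `r(0) = 1` we have `r(C) g - g = r(C) w - w`, and by locality this
is supported within distance `deg r` of `L'`. Taking `deg r = N - 1` gives `1_L g = 1_L r(C) g`,
while `‖r(C) g‖ ≤ sup_{[a,b]} |r| · ‖g‖`. The rescaled Chebyshev polynomial
`T_{N-1}((a + b - 2λ)/(b - a)) / T_{N-1}((a + b)/(b - a))` makes this supremum
`2 q^{N-1}/(1 + q^{2(N-1)})`. Without a spectral theorem, the bound `‖T_n(P)‖ ≤ 1` for a symmetric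
contraction `P` comes from the Pell identity `T_{n+1}² = 1 + (X² - 1) U_n²`.
-/

open MeasureTheory RealInnerProductSpace

/-- Multiplication of an `L²` function by the indicator function of a measurable set. -/
noncomputable def indMul {Ω : Type*} [MeasurableSpace Ω] {μ : Measure Ω}
    (s : Set Ω) (hs : MeasurableSet s) (u : Lp ℝ 2 μ) : Lp ℝ 2 μ :=
  ((Lp.memLp u).indicator hs).toLp (s.indicator u)

/-- The distance `δ(L, L') = min {δ(T,T') : T ∈ L, T' ∈ L'}` between two collections. -/
noncomputable def setDist {𝒯 : Type*} (δ : 𝒯 → 𝒯 → ℕ) (L L' : Set 𝒯) : ℕ :=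
  sInf {n | ∃ T ∈ L, ∃ T' ∈ L', δ T T' = n}

/-- The union `⋃ T ∈ L, A T` of measurable sets over a collection is measurable. -/
theorem unionMeasurable {Ω 𝒯 : Type*} [MeasurableSpace Ω] [Countable 𝒯] {A : 𝒯 → Set Ω}
    (hA : ∀ T, MeasurableSet (A T)) (L : Set 𝒯) : MeasurableSet (⋃ T ∈ L, A T) :=
  MeasurableSet.biUnion (Set.to_countable L) fun T _ => hA T

open Polynomial

namespace Polynomial.Chebyshev

theorem T_eval_half_add_inv {K : Type*} [Field K] [NeZero (2 : K)] {y : K} (hy : y ≠ 0)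
    (n : ℕ) : (T K n).eval ((y + y⁻¹) / 2) = (y ^ n + y⁻¹ ^ n) / 2 := by
  induction n using Nat.twoStepInduction with
  | zero => simp
  | one => simp
  | more n ih ih' =>
    push_cast at ih' ⊢
    simp only [T_add_two, eval_sub, eval_mul, eval_ofNat, eval_X, ih, ih']
    linear_combination ((y + y⁻¹) * (y ^ (n + 1) + y⁻¹ ^ (n + 1)) / 2) *
        mul_inv_cancel₀ (two_ne_zero : (2 : K) ≠ 0) + ((y ^ n + y⁻¹ ^ n) / 2) * mul_inv_cancel₀ hy

theorem T_add_one_sq (R : Type*) [CommRing R] (n : ℕ) :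
    T R (n + 1) ^ 2 = 1 + (X ^ 2 - 1) * U R n ^ 2 := by
  induction n with
  | zero => simp
  | succ n ih =>
    push_cast
    rw [add_assoc, one_add_one_eq_two, T_eq_X_mul_T_sub_pol_U, U_eq_X_mul_U_add_T]
    linear_combination ih

end Polynomial.Chebyshev

section NormedSpace

variable {E F : Type*} [NormedAddCommGroup E] [NormedSpace ℝ E]
  [NormedAddCommGroup F] [NormedSpace ℝ F]

theorem ContinuousLinearMap.coe_aeval (S : E →L[ℝ] E) (p : ℝ[X]) :
    ((aeval S p : E →L[ℝ] E) : E →ₗ[ℝ] E) = aeval (S : E →ₗ[ℝ] E) p := by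
  induction p using Polynomial.induction_on' with
  | add p q hp hq => simp only [map_add, ContinuousLinearMap.toLinearMap_add, hp, hq]
  | monomial n c =>
    simp only [aeval_monomial, Algebra.algebraMap_eq_smul_one, smul_one_mul,
      ContinuousLinearMap.toLinearMap_smul, ContinuousLinearMap.toLinearMap_pow]

theorem ContinuousLinearMap.aeval_apply_of_apply_eq_zero {S : E →L[ℝ] E} {y : E} (hy : S y = 0)
    (p : ℝ[X]) : aeval S p y = p.eval 0 • y := by
  have := Module.End.aeval_apply_of_mem_apply_eq_smul (f := (S : E →ₗ[ℝ] E)) (p := p)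
    (by rw [zero_smul]; exact hy)
  rwa [← ContinuousLinearMap.coe_aeval] at this

theorem ContinuousLinearMap.map_aeval_apply_of_semiconj (f : E →L[ℝ] F) {S : E →L[ℝ] E}
    {T : F →L[ℝ] F} (h : ∀ x, f (S x) = T (f x)) (p : ℝ[X]) (x : E) :
    f (aeval S p x) = aeval T p (f x) := by
  have hpow : ∀ n x, f ((S ^ n) x) = (T ^ n) (f x) := fun n => by
    induction n with
    | zero => simp
    | succ n ih => intro x; rw [pow_succ, pow_succ, mul_apply_eq_comp, mul_apply_eq_comp, ih, h]
  induction p using Polynomial.induction_on' with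
  | add p q hp hq => simp only [map_add, add_apply, hp, hq]
  | monomial n c =>
    simp only [aeval_monomial, Algebra.algebraMap_eq_smul_one, smul_one_mul, smul_apply, map_smul,
      hpow]

end NormedSpace

section InnerProductSpace

variable {E : Type*} [NormedAddCommGroup E] [InnerProductSpace ℝ E]

theorem LinearMap.IsSymmetric.aeval {T : E →ₗ[ℝ] E} (hT : T.IsSymmetric) (p : ℝ[X]) :
    (aeval T p).IsSymmetric := by
  induction p using Polynomial.induction_on' with
  | add p q hp hq => simpa only [map_add] using hp.add hq
  | monomial n c =>
    rw [aeval_monomial, Algebra.algebraMap_eq_smul_one, smul_one_mul]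
    exact (hT.pow n).smul (star_trivial c)

theorem ContinuousLinearMap.opNorm_le_of_abs_inner_le {T : E →L[ℝ] E}
    (hT : (T : E →ₗ[ℝ] E).IsSymmetric) {c : ℝ} (hc : 0 ≤ c)
    (h : ∀ x, |⟪T x, x⟫| ≤ c * ‖x‖ ^ 2) : ‖T‖ ≤ c := by
  rw [T.norm_eq_iSup_rayleighQuotient hT]
  refine ciSup_le fun x => ?_
  rcases eq_or_ne x 0 with rfl | hx
  · simpa using hc
  · rw [rayleighQuotient, reApplyInnerSelf_apply, RCLike.re_to_real, abs_div, abs_sq,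
      div_le_iff₀ (by positivity)]
    exact h x

open Chebyshev in
theorem norm_aeval_T_apply_le {P : E →L[ℝ] E} (hP : (P : E →ₗ[ℝ] E).IsSymmetric)
    (hP1 : ‖P‖ ≤ 1) (n : ℕ) (x : E) : ‖aeval P (T ℝ n) x‖ ≤ ‖x‖ := by
  obtain _ | m := n
  · simp
  set G := aeval P (T ℝ (m + 1))
  set B := aeval P (U ℝ m)
  have hG : (G : E →ₗ[ℝ] E).IsSymmetric := by
    rw [ContinuousLinearMap.coe_aeval]; exact hP.aeval _
  have hB : (B : E →ₗ[ℝ] E).IsSymmetric := by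
    rw [ContinuousLinearMap.coe_aeval]; exact hP.aeval _
  have pell : G * G = 1 + B * (P * P - 1) * B := by
    have h : T ℝ (m + 1) * T ℝ (m + 1) = 1 + U ℝ m * (X * X - 1) * U ℝ m := by
      linear_combination T_add_one_sq ℝ m
    simpa [G, B] using congrArg (aeval P) h
  have hdefect : ∀ y, ⟪(P * P - 1) y, y⟫ ≤ 0 := fun y => by
    have : ‖P y‖ ≤ ‖y‖ := by simpa using P.le_of_opNorm_le hP1 y
    rw [sub_apply, mul_apply_eq_comp, inner_sub_left, hP.apply_clm,
      one_apply_eq_self, real_inner_self_eq_norm_sq, real_inner_self_eq_norm_sq]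
    nlinarith [norm_nonneg (P y)]
  have : ‖G x‖ ^ 2 ≤ ‖x‖ ^ 2 := calc
    ‖G x‖ ^ 2 = ⟪(G * G) x, x⟫ := by
      rw [mul_apply_eq_comp, hG.apply_clm, real_inner_self_eq_norm_sq]
    _ = ‖x‖ ^ 2 + ⟪(P * P - 1) (B x), B x⟫ := by
      rw [pell, add_apply, inner_add_left, one_apply_eq_self,
        real_inner_self_eq_norm_sq, mul_apply_eq_comp, mul_apply_eq_comp, hB.apply_clm]
    _ ≤ ‖x‖ ^ 2 := by linarith [hdefect (B x)]
  exact (pow_le_pow_iff_left₀ (norm_nonneg _) (norm_nonneg _) two_ne_zero).mp this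

theorem one_lt_sqrt_div {a b : ℝ} (ha : 0 < a) (hab : a < b) : 1 < √(b / a) := by
  rw [Real.lt_sqrt zero_le_one, one_pow]
  exact (one_lt_div ha).mpr hab

theorem add_div_sub_eq_half_add_inv {a b q : ℝ} (ha : 0 < a) (hab : a < b)
    (hq : q = (√(b / a) - 1) / (√(b / a) + 1)) : (a + b) / (b - a) = (q + q⁻¹) / 2 := by
  have hs := one_lt_sqrt_div ha hab
  have hb : b = √(b / a) ^ 2 * a := by
    rw [Real.sq_sqrt (div_pos (ha.trans hab) ha).le, div_mul_cancel₀ _ ha.ne']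
  set s := √(b / a)
  rw [hq, inv_div, show a + b = (s ^ 2 + 1) * a by rw [hb]; ring,
    show b - a = (s ^ 2 - 1) * a by rw [hb]; ring]
  have : s - 1 ≠ 0 := by linarith
  have : s ^ 2 - 1 ≠ 0 := by nlinarith
  field_simp
  ring

theorem exists_residual_polynomial_of_lt {S : E →L[ℝ] E} (hS : (S : E →ₗ[ℝ] E).IsSymmetric)
    {a b q : ℝ} (ha : 0 < a) (hab : a < b)
    (hform : ∀ x, a * ‖x‖ ^ 2 ≤ ⟪S x, x⟫ ∧ ⟪S x, x⟫ ≤ b * ‖x‖ ^ 2)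
    (hq : q = (√(b / a) - 1) / (√(b / a) + 1)) (n : ℕ) :
    ∃ r : ℝ[X], r.eval 0 = 1 ∧ r.natDegree ≤ n ∧
      ∀ x, ‖aeval S r x‖ ≤ 2 * q ^ n / (1 + q ^ (2 * n)) * ‖x‖ := by
  have hq0 : 0 < q := by
    have := one_lt_sqrt_div ha hab
    rw [hq]; apply div_pos <;> linarith
  set x0 := (a + b) / (b - a)
  set t := (Chebyshev.T ℝ n).eval x0
  have ht : t = (1 + q ^ (2 * n)) / (2 * q ^ n) := by
    simp only [t, x0, add_div_sub_eq_half_add_inv ha hab hq,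
      Chebyshev.T_eval_half_add_inv hq0.ne', inv_pow]
    field_simp
    ring
  have ht0 : 0 < t := by rw [ht]; positivity
  set ℓ : ℝ[X] := C (-(2 / (b - a))) * X + C x0
  have hℓS : (aeval S ℓ : E →ₗ[ℝ] E).IsSymmetric := by
    rw [ContinuousLinearMap.coe_aeval]; exact hS.aeval ℓ
  have hℓ : ‖aeval S ℓ‖ ≤ 1 := by
    refine ContinuousLinearMap.opNorm_le_of_abs_inner_le hℓS zero_le_one fun x => ?_
    obtain ⟨hlo, hhi⟩ := hform x
    have hba : 0 < b - a := by linarith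
    simp only [ℓ, map_add, map_mul, aeval_C, aeval_X, add_apply, mul_apply_eq_comp,
      Algebra.algebraMap_eq_smul_one, smul_apply, one_apply_eq_self, inner_add_left,
      real_inner_smul_left, real_inner_self_eq_norm_sq, x0]
    have hx : -(2 / (b - a)) * ⟪S x, x⟫ + (a + b) / (b - a) * ‖x‖ ^ 2
        = ((a + b) * ‖x‖ ^ 2 - 2 * ⟪S x, x⟫) / (b - a) := by
      field_simp
      ring
    rw [hx, abs_le, le_div_iff₀ hba, div_le_iff₀ hba]
    constructor <;> nlinarith
  refine ⟨C t⁻¹ * (Chebyshev.T ℝ n).comp ℓ, ?_, ?_, fun x => ?_⟩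
  · simp only [eval_mul, eval_C, eval_comp, ℓ, eval_add, eval_X, mul_zero, zero_add]
    exact inv_mul_cancel₀ ht0.ne'
  · refine natDegree_C_mul_le _ _ |>.trans <| natDegree_comp_le.trans ?_
    rw [Chebyshev.natDegree_T, Int.natAbs_natCast]
    exact (Nat.mul_le_mul_left n natDegree_linear_le).trans (mul_one n).le
  · rw [map_mul, aeval_C, aeval_comp, mul_apply_eq_comp, Algebra.algebraMap_eq_smul_one,
      smul_apply, one_apply_eq_self, norm_smul, Real.norm_of_nonneg (inv_nonneg.mpr ht0.le), ht,
      inv_div]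
    gcongr
    exact norm_aeval_T_apply_le hℓS hℓ n x

theorem exists_residual_polynomial {S : E →L[ℝ] E} (hS : (S : E →ₗ[ℝ] E).IsSymmetric) {a b q : ℝ}
    (ha : 0 < a) (hab : a ≤ b)
    (hform : ∀ x, a * ‖x‖ ^ 2 ≤ ⟪S x, x⟫ ∧ ⟪S x, x⟫ ≤ b * ‖x‖ ^ 2)
    (hq : q = (√(b / a) - 1) / (√(b / a) + 1)) (n : ℕ) :
    ∃ r : ℝ[X], r.eval 0 = 1 ∧ r.natDegree ≤ n ∧
      ∀ x, ‖aeval S r x‖ ≤ 2 * q ^ n / (1 + q ^ (2 * n)) * ‖x‖ := by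
  rcases hab.lt_or_eq with hlt | rfl
  · exact exists_residual_polynomial_of_lt hS ha hlt hform hq n
  obtain _ | n := n
  · exact ⟨1, eval_one, natDegree_one.le, fun x => by norm_num⟩
  have hSa : S = a • 1 := by
    have hsymm : ((S - a • 1 : E →L[ℝ] E) : E →ₗ[ℝ] E).IsSymmetric := fun x y => by
      simp [inner_sub_left, inner_sub_right, hS.apply_clm, real_inner_smul_left,
        real_inner_smul_right]
    have := ContinuousLinearMap.opNorm_le_of_abs_inner_le hsymm le_rfl fun x => by
      obtain ⟨hlo, hhi⟩ := hform x
      simp only [sub_apply, smul_apply, one_apply_eq_self, inner_sub_left, real_inner_smul_left,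
        real_inner_self_eq_norm_sq, zero_mul, abs_nonpos_iff]
      linarith
    exact sub_eq_zero.mp (norm_le_zero_iff.mp this)
  refine ⟨1 - C a⁻¹ * X, by simp, ?_, fun x => ?_⟩
  · compute_degree!
  · simp [hSa, hq, ha.ne']

theorem exists_residual_polynomial_of_mapsTo {V : Submodule ℝ E} {C : E →L[ℝ] E}
    (hC : (C : E →ₗ[ℝ] E).IsSymmetric) (hV : ∀ v ∈ V, C v ∈ V) {a b q : ℝ}
    (ha : 0 < a) (hab : a ≤ b)
    (hform : ∀ v ∈ V, a * ‖v‖ ^ 2 ≤ ⟪C v, v⟫ ∧ ⟪C v, v⟫ ≤ b * ‖v‖ ^ 2)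
    (hq : q = (√(b / a) - 1) / (√(b / a) + 1)) (n : ℕ) :
    ∃ r : ℝ[X], r.eval 0 = 1 ∧ r.natDegree ≤ n ∧
      ∀ v ∈ V, ‖aeval C r v‖ ≤ 2 * q ^ n / (1 + q ^ (2 * n)) * ‖v‖ := by
  set S : V →L[ℝ] V := (C ∘L V.subtypeL).codRestrict V fun v => hV v v.2
  obtain ⟨r, hr0, hrdeg, hr⟩ := exists_residual_polynomial (S := S) (fun x y => hC x y) ha hab
    (fun v => hform v v.2) hq n
  refine ⟨r, hr0, hrdeg, fun v hv => ?_⟩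
  exact (congrArg norm (V.subtypeL.map_aeval_apply_of_semiconj (S := S) (fun _ => rfl) r
    ⟨v, hv⟩)).symm.trans_le (hr ⟨v, hv⟩)

theorem apply_orthogonalProjectionOnto_eq {V : Submodule ℝ E} [V.HasOrthogonalProjection]
    {C : E →L[ℝ] E} (hC : (C : E →ₗ[ℝ] E).IsSymmetric) (hrange : ∀ u, C u ∈ V) (w : E) :
    C (V.orthogonalProjectionOnto w) = C w := by
  refine ext_inner_right ℝ fun y => ?_
  rw [hC.apply_clm, hC.apply_clm, ← sub_eq_zero, ← inner_sub_left,
    ← Submodule.starProjection_apply, ← neg_sub, inner_neg_left,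
    V.starProjection_inner_eq_zero w _ (hrange y), neg_zero]

end InnerProductSpace

theorem two_mul_div_one_add_sq_le_min {y : ℝ} (hy : 0 ≤ y) :
    2 * y / (1 + y ^ 2) ≤ min (2 * y) 1 := by
  refine le_min (div_le_self (by positivity) (by nlinarith)) ?_
  rw [div_le_one (by positivity)]
  nlinarith [sq_nonneg (y - 1)]

section Vanishing

variable {Ω : Type*} [MeasurableSpace Ω] {μ : Measure Ω}

def vanishingOn (μ : Measure Ω) (s : Set Ω) : Submodule ℝ (Lp ℝ 2 μ) where
  carrier := {f | ∀ᵐ x ∂μ, x ∈ s → (f : Ω → ℝ) x = 0}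
  add_mem' {f g} hf hg := by
    filter_upwards [hf, hg, Lp.coeFn_add f g] with x hfx hgx h hx
    rw [h, Pi.add_apply, hfx hx, hgx hx, add_zero]
  zero_mem' := by
    filter_upwards [Lp.coeFn_zero ℝ 2 μ] with x h _
    rw [h, Pi.zero_apply]
  smul_mem' c f hf := by
    filter_upwards [hf, Lp.coeFn_smul c f] with x hfx h hx
    rw [h, Pi.smul_apply, hfx hx, smul_zero]

theorem mem_vanishingOn {s : Set Ω} {f : Lp ℝ 2 μ} :
    f ∈ vanishingOn μ s ↔ ∀ᵐ x ∂μ, x ∈ s → (f : Ω → ℝ) x = 0 :=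
  Iff.rfl

theorem vanishingOn_anti {s t : Set Ω} (h : s ⊆ t) : vanishingOn μ t ≤ vanishingOn μ s :=
  fun _ hf => (mem_vanishingOn.mp hf).mono fun _ hx hxs => hx (h hxs)

theorem indMul_coeFn (s : Set Ω) (hs : MeasurableSet s) (u : Lp ℝ 2 μ) :
    indMul s hs u =ᵐ[μ] s.indicator u :=
  MemLp.coeFn_toLp _

theorem indMul_mem_vanishingOn_compl (s : Set Ω) (hs : MeasurableSet s) (u : Lp ℝ 2 μ) :
    indMul s hs u ∈ vanishingOn μ sᶜ := by
  filter_upwards [indMul_coeFn s hs u] with x h hx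
  rw [h, Set.indicator_of_notMem hx]

theorem norm_indMul_le (s : Set Ω) (hs : MeasurableSet s) (u : Lp ℝ 2 μ) :
    ‖indMul s hs u‖ ≤ ‖u‖ := by
  rw [Lp.norm_def, Lp.norm_def, eLpNorm_congr_ae (indMul_coeFn s hs u)]
  exact ENNReal.toReal_mono (Lp.eLpNorm_ne_top u) (eLpNorm_indicator_le _)

theorem indMul_eq_of_sub_mem {s : Set Ω} (hs : MeasurableSet s) {f g : Lp ℝ 2 μ}
    (h : f - g ∈ vanishingOn μ s) : indMul s hs f = indMul s hs g := by
  refine Lp.ext ?_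
  filter_upwards [indMul_coeFn s hs f, indMul_coeFn s hs g, Lp.coeFn_sub f g, h]
    with x hf hg hsub hx
  rw [hf, hg]
  by_cases hxs : x ∈ s
  · rw [hsub, Pi.sub_apply, sub_eq_zero] at hx
    rw [Set.indicator_of_mem hxs, Set.indicator_of_mem hxs, hx hxs]
  · rw [Set.indicator_of_notMem hxs, Set.indicator_of_notMem hxs]

end Vanishing

theorem indMul_orthogonalProjectionOnto_eq {Ω : Type*} [MeasurableSpace Ω] {μ : Measure Ω}
    {V : Submodule ℝ (Lp ℝ 2 μ)} [V.HasOrthogonalProjection] {C : Lp ℝ 2 μ →L[ℝ] Lp ℝ 2 μ}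
    (hC : (C : Lp ℝ 2 μ →ₗ[ℝ] Lp ℝ 2 μ).IsSymmetric) (hrange : ∀ u, C u ∈ V) {r : ℝ[X]}
    (hr0 : r.eval 0 = 1) {s : Set Ω} (hs : MeasurableSet s) {w : Lp ℝ 2 μ}
    (hw : aeval C r w - w ∈ vanishingOn μ s) :
    indMul s hs (V.orthogonalProjectionOnto w : Lp ℝ 2 μ)
      = indMul s hs (aeval C r (V.orthogonalProjectionOnto w : Lp ℝ 2 μ)) := by
  refine (indMul_eq_of_sub_mem hs ?_).symm
  have hker : C ((V.orthogonalProjectionOnto w : Lp ℝ 2 μ) - w) = 0 := by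
    rw [map_sub, apply_orthogonalProjectionOnto_eq hC hrange, sub_self]
  have := ContinuousLinearMap.aeval_apply_of_apply_eq_zero hker r
  rw [hr0, one_smul, map_sub, sub_eq_sub_iff_sub_eq_sub] at this
  rwa [this]

section SetDist

variable {𝒯 : Type*}

def closedNbhd (δ : 𝒯 → 𝒯 → ℕ) (L : Set 𝒯) (j : ℕ) : Set 𝒯 :=
  {T | setDist δ {T} L ≤ j}

variable {δ : 𝒯 → 𝒯 → ℕ} {L L' : Set 𝒯}

theorem setDist_le_of_mem {T T' : 𝒯} (hT : T ∈ L) (hT' : T' ∈ L') :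
    setDist δ L L' ≤ δ T T' :=
  Nat.sInf_le ⟨T, hT, T', hT', rfl⟩

theorem exists_eq_setDist_singleton (hL : L.Nonempty) (T : 𝒯) :
    ∃ T' ∈ L, δ T T' = setDist δ {T} L := by
  obtain ⟨_, rfl, T', hT', h⟩ :=
    Nat.sInf_mem (s := {n | ∃ T₀ ∈ ({T} : Set 𝒯), ∃ T' ∈ L, δ T₀ T' = n})
      ⟨_, T, rfl, hL.some, hL.some_mem, rfl⟩
  exact ⟨T', hT', h⟩

theorem closedNbhd_mono {i j : ℕ} (h : i ≤ j) : closedNbhd δ L i ⊆ closedNbhd δ L j :=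
  fun _ hT => le_trans hT h

theorem subset_closedNbhd (hδ : ∀ T, δ T T = 0) (j : ℕ) : L ⊆ closedNbhd δ L j :=
  fun T hT => (setDist_le_of_mem (δ := δ) (Set.mem_singleton T) hT).trans (hδ T ▸ Nat.zero_le j)

theorem closedNbhd_closedNbhd_one_subset (hδ : ∀ T, δ T T = 0)
    (htri : ∀ T T' T'', δ T T'' ≤ δ T T' + δ T' T'') (hL : L.Nonempty) (j : ℕ) :
    closedNbhd δ (closedNbhd δ L j) 1 ⊆ closedNbhd δ L (j + 1) := by
  intro T hT
  obtain ⟨T₁, hT₁, h₁⟩ := exists_eq_setDist_singleton (δ := δ) (hL.mono (subset_closedNbhd hδ j)) T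
  obtain ⟨T₂, hT₂, h₂⟩ := exists_eq_setDist_singleton (δ := δ) hL T₁
  have hT : setDist δ {T} (closedNbhd δ L j) ≤ 1 := hT
  have hT₁ : setDist δ {T₁} L ≤ j := hT₁
  exact (setDist_le_of_mem (Set.mem_singleton T) hT₂).trans ((htri T T₁ T₂).trans (by omega))

theorem disjoint_closedNbhd (hL' : L'.Nonempty) {j : ℕ} (hj : j < setDist δ L L') :
    Disjoint L (closedNbhd δ L' j) := by
  refine Set.disjoint_left.mpr fun T hT hT' => ?_
  obtain ⟨T', hT'L', h⟩ := exists_eq_setDist_singleton (δ := δ) hL' T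
  have := setDist_le_of_mem (δ := δ) hT hT'L'
  simp only [closedNbhd, Set.mem_ofPred_eq] at hT'
  omega

end SetDist

theorem Set.biUnion_subset_compl_biUnion {ι α : Type*} {A : ι → Set α}
    (hA : Pairwise (Function.onFun Disjoint A)) {s t : Set ι} (h : Disjoint s t) :
    ⋃ i ∈ s, A i ⊆ (⋃ i ∈ t, A i)ᶜ :=
  Disjoint.subset_compl_right <| Set.disjoint_iUnion₂_left.mpr fun _ hi =>
    Set.disjoint_iUnion₂_right.mpr fun _ hj => hA fun hij => h.ne_of_mem hi (hij ▸ hj) rfl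

section Locality

variable {Ω 𝒯 : Type*} [MeasurableSpace Ω] {μ : Measure Ω}

def IsLocal (A : 𝒯 → Set Ω) (δ : 𝒯 → 𝒯 → ℕ) (C : Lp ℝ 2 μ →L[ℝ] Lp ℝ 2 μ) : Prop :=
  ∀ (L : Set 𝒯) (v : Lp ℝ 2 μ), v ∈ vanishingOn μ (⋃ T ∈ L, A T)ᶜ →
    C v ∈ vanishingOn μ (⋃ T ∈ closedNbhd δ L 1, A T)ᶜ

variable {A : 𝒯 → Set Ω} {δ : 𝒯 → 𝒯 → ℕ} {C : Lp ℝ 2 μ →L[ℝ] Lp ℝ 2 μ} {L : Set 𝒯}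
  {w : Lp ℝ 2 μ}

theorem vanishingOn_compl_biUnion_mono {L₁ L₂ : Set 𝒯} (h : L₁ ⊆ L₂) :
    vanishingOn μ (⋃ T ∈ L₁, A T)ᶜ ≤ vanishingOn μ (⋃ T ∈ L₂, A T)ᶜ :=
  vanishingOn_anti (Set.compl_subset_compl.mpr (Set.biUnion_subset_biUnion_left h))

theorem IsLocal.pow_apply_mem (hC : IsLocal A δ C) (hδ : ∀ T, δ T T = 0)
    (htri : ∀ T T' T'', δ T T'' ≤ δ T T' + δ T' T'') (hL : L.Nonempty)
    (hw : w ∈ vanishingOn μ (⋃ T ∈ L, A T)ᶜ) (j : ℕ) :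
    (C ^ j) w ∈ vanishingOn μ (⋃ T ∈ closedNbhd δ L j, A T)ᶜ := by
  induction j with
  | zero => exact vanishingOn_compl_biUnion_mono (subset_closedNbhd hδ 0) (by simpa using hw)
  | succ j ih =>
    rw [pow_succ', mul_apply_eq_comp]
    exact vanishingOn_compl_biUnion_mono (closedNbhd_closedNbhd_one_subset hδ htri hL j)
      (hC _ _ ih)

theorem IsLocal.aeval_apply_mem (hC : IsLocal A δ C) (hδ : ∀ T, δ T T = 0)
    (htri : ∀ T T' T'', δ T T'' ≤ δ T T' + δ T' T'') (hL : L.Nonempty)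
    (hw : w ∈ vanishingOn μ (⋃ T ∈ L, A T)ᶜ) {r : ℝ[X]} {j : ℕ} (hr : r.natDegree ≤ j) :
    aeval C r w ∈ vanishingOn μ (⋃ T ∈ closedNbhd δ L j, A T)ᶜ := by
  rw [aeval_eq_sum_range, sum_apply]
  refine Submodule.sum_mem _ fun i hi => ?_
  rw [smul_apply]
  refine Submodule.smul_mem _ _ (vanishingOn_compl_biUnion_mono (closedNbhd_mono ?_)
    (hC.pow_apply_mem hδ htri hL hw i))
  exact Nat.le_of_lt_succ (Finset.mem_range.mp hi) |>.trans hr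

theorem IsLocal.aeval_apply_sub_mem (hC : IsLocal A δ C) (hδ : ∀ T, δ T T = 0)
    (htri : ∀ T T' T'', δ T T'' ≤ δ T T' + δ T' T'') (hA : Pairwise (Function.onFun Disjoint A))
    {L' : Set 𝒯} (hL' : L'.Nonempty) (hw : w ∈ vanishingOn μ (⋃ T ∈ L', A T)ᶜ) {r : ℝ[X]}
    {j : ℕ} (hr : r.natDegree ≤ j) (hj : j < setDist δ L L') :
    aeval C r w - w ∈ vanishingOn μ (⋃ T ∈ L, A T) :=
  vanishingOn_anti (Set.biUnion_subset_compl_biUnion hA (disjoint_closedNbhd hL' hj))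
    (sub_mem (hC.aeval_apply_mem hδ htri hL' hw hr)
      (vanishingOn_compl_biUnion_mono (subset_closedNbhd hδ j) hw))

end Locality

theorem stmt_1_general {Ω : Type*} [MeasurableSpace Ω] (μ : Measure Ω)
    {𝒯 : Type*} [Fintype 𝒯]
    (A : 𝒯 → Set Ω) (hAmeas : ∀ T, MeasurableSet (A T))
    (hdisj : Pairwise (Function.onFun Disjoint A))
    (δ : 𝒯 → 𝒯 → ℕ)
    (hδ0 : ∀ T T', δ T T' = 0 ↔ T = T')
    (hδtri : ∀ T T' T'', δ T T'' ≤ δ T T' + δ T' T'')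
    (V : Submodule ℝ (Lp ℝ 2 μ)) [CompleteSpace V]
    (C : Lp ℝ 2 μ →L[ℝ] Lp ℝ 2 μ)
    (hself : ∀ u w : Lp ℝ 2 μ, ⟪C u, w⟫ = ⟪u, C w⟫)
    (hrange : ∀ u : Lp ℝ 2 μ, C u ∈ V)
    (a b : ℝ) (ha : 0 < a) (hab : a ≤ b)
    (hell : ∀ v ∈ V, a * ‖v‖ ^ 2 ≤ ⟪C v, v⟫ ∧ ⟪C v, v⟫ ≤ b * ‖v‖ ^ 2)
    (hloc : ∀ (L : Set 𝒯) (v : Lp ℝ 2 μ),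
      (∀ᵐ x ∂μ, x ∉ ⋃ T ∈ L, A T → (v : Ω → ℝ) x = 0) →
      (∀ᵐ x ∂μ, x ∉ ⋃ T ∈ {T' : 𝒯 | setDist δ {T'} L ≤ 1}, A T → (C v : Ω → ℝ) x = 0))
    (q : ℝ) (hq : q = (Real.sqrt (b / a) - 1) / (Real.sqrt (b / a) + 1))
    (L L' : Set 𝒯) (hL' : L'.Nonempty)
    (N : ℕ) (hN : N = setDist δ L L') (hN1 : 1 ≤ N)
    (u : Lp ℝ 2 μ) :
    ‖indMul (⋃ T ∈ L, A T) (unionMeasurable hAmeas L)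
        (Submodule.orthogonalProjectionOnto V (indMul (⋃ T ∈ L', A T) (unionMeasurable hAmeas L') u) : Lp ℝ 2 μ)‖
      ≤ (2 * q ^ (N - 1) / (1 + q ^ (2 * (N - 1))))
        * ‖indMul (⋃ T ∈ L', A T) (unionMeasurable hAmeas L') u‖ ∧
    ‖indMul (⋃ T ∈ L, A T) (unionMeasurable hAmeas L)
        (Submodule.orthogonalProjectionOnto V (indMul (⋃ T ∈ L', A T) (unionMeasurable hAmeas L') u) : Lp ℝ 2 μ)‖
      ≤ min (2 * q ^ (N - 1)) 1
        * ‖indMul (⋃ T ∈ L', A T) (unionMeasurable hAmeas L') u‖ := by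
  set w := indMul (⋃ T ∈ L', A T) (unionMeasurable hAmeas L') u
  set g := (V.orthogonalProjectionOnto w : Lp ℝ 2 μ)
  obtain ⟨r, hr0, hrdeg, hr⟩ := exists_residual_polynomial_of_mapsTo hself (fun v _ => hrange v)
    ha hab hell hq (N - 1)
  have hsupp : aeval C r w - w ∈ vanishingOn μ (⋃ T ∈ L, A T) :=
    IsLocal.aeval_apply_sub_mem hloc (fun T => (hδ0 T T).mpr rfl) hδtri hdisj hL'
      (indMul_mem_vanishingOn_compl _ _ u) hrdeg (by omega)
  have hq0 : 0 ≤ q := by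
    have : 1 ≤ √(b / a) := Real.one_le_sqrt.mpr ((one_le_div ha).mpr hab)
    rw [hq]; apply div_nonneg <;> linarith
  have hbound : ‖indMul (⋃ T ∈ L, A T) (unionMeasurable hAmeas L) g‖
      ≤ 2 * q ^ (N - 1) / (1 + q ^ (2 * (N - 1))) * ‖w‖ := calc
    _ = ‖indMul (⋃ T ∈ L, A T) (unionMeasurable hAmeas L) (aeval C r g)‖ := by
      rw [indMul_orthogonalProjectionOnto_eq hself hrange hr0 _ hsupp]
    _ ≤ ‖aeval C r g‖ := norm_indMul_le _ _ _
    _ ≤ 2 * q ^ (N - 1) / (1 + q ^ (2 * (N - 1))) * ‖g‖ := hr g (Submodule.coe_mem _)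
    _ ≤ 2 * q ^ (N - 1) / (1 + q ^ (2 * (N - 1))) * ‖w‖ := by
      gcongr
      exact V.norm_orthogonalProjectionOnto_apply_le w
  refine ⟨hbound, hbound.trans (mul_le_mul_of_nonneg_right ?_ (norm_nonneg _))⟩
  rw [mul_comm 2 (N - 1), pow_mul]
  exact two_mul_div_one_add_sq_le_min (pow_nonneg hq0 _)

/-- Decay estimate of Bank–Yserentant.  Let `V` be a closed subspace of
`L²(μ)`, `Q` the orthogonal projection onto `V` and `C` a continuous self-adjoint linear
operator with range in `V` satisfying the ellipticity and locality properties.  With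
`q = (√(b/a) − 1)/(√(b/a) + 1)` one has, for nonempty collections `L, L'` at distance
`N = δ(L,L') ≥ 1`, the decay estimates
`‖1_L Q(1_{L'} u)‖₂ ≤ (2 q^{N−1}/(1+q^{2(N−1)})) ‖1_{L'} u‖₂ ≤ min{2 q^{N−1},1} ‖1_{L'} u‖₂`. -/
theorem stmt_1 {Ω : Type*} [MeasurableSpace Ω] (μ : Measure Ω)
    {𝒯 : Type*} [Fintype 𝒯] [Nonempty 𝒯]
    (A : 𝒯 → Set Ω) (hAmeas : ∀ T, MeasurableSet (A T))
    (hdisj : Pairwise (Function.onFun Disjoint A))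
    (hApos : ∀ T, 0 < μ (A T))
    (hcover : μ (Set.univ \ ⋃ T, A T) = 0)
    (δ : 𝒯 → 𝒯 → ℕ)
    (hδ0 : ∀ T T', δ T T' = 0 ↔ T = T')
    (hδsymm : ∀ T T', δ T T' = δ T' T)
    (hδtri : ∀ T T' T'', δ T T'' ≤ δ T T' + δ T' T'')
    (V : Submodule ℝ (Lp ℝ 2 μ)) [CompleteSpace V]
    (C : Lp ℝ 2 μ →L[ℝ] Lp ℝ 2 μ)
    (hself : ∀ u w : Lp ℝ 2 μ, ⟪C u, w⟫ = ⟪u, C w⟫)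
    (hrange : ∀ u : Lp ℝ 2 μ, C u ∈ V)
    (a b : ℝ) (ha : 0 < a) (hab : a ≤ b)
    (hell : ∀ v ∈ V, a * ‖v‖ ^ 2 ≤ ⟪C v, v⟫ ∧ ⟪C v, v⟫ ≤ b * ‖v‖ ^ 2)
    (hloc : ∀ (L : Set 𝒯) (v : Lp ℝ 2 μ),
      (∀ᵐ x ∂μ, x ∉ ⋃ T ∈ L, A T → (v : Ω → ℝ) x = 0) →
      (∀ᵐ x ∂μ, x ∉ ⋃ T ∈ {T' : 𝒯 | setDist δ {T'} L ≤ 1}, A T → (C v : Ω → ℝ) x = 0))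
    (q : ℝ) (hq : q = (Real.sqrt (b / a) - 1) / (Real.sqrt (b / a) + 1))
    (L L' : Set 𝒯) (hL : L.Nonempty) (hL' : L'.Nonempty)
    (N : ℕ) (hN : N = setDist δ L L') (hN1 : 1 ≤ N)
    (u : Lp ℝ 2 μ) :
    ‖indMul (⋃ T ∈ L, A T) (unionMeasurable hAmeas L)
        (Submodule.orthogonalProjectionOnto V (indMul (⋃ T ∈ L', A T) (unionMeasurable hAmeas L') u) : Lp ℝ 2 μ)‖
      ≤ (2 * q ^ (N - 1) / (1 + q ^ (2 * (N - 1))))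
        * ‖indMul (⋃ T ∈ L', A T) (unionMeasurable hAmeas L') u‖ ∧
    ‖indMul (⋃ T ∈ L, A T) (unionMeasurable hAmeas L)
        (Submodule.orthogonalProjectionOnto V (indMul (⋃ T ∈ L', A T) (unionMeasurable hAmeas L') u) : Lp ℝ 2 μ)‖
      ≤ min (2 * q ^ (N - 1)) 1
        * ‖indMul (⋃ T ∈ L', A T) (unionMeasurable hAmeas L') u‖ :=
  stmt_1_general μ A hAmeas hdisj δ hδ0 hδtri V C hself hrange a b ha hab hell hloc q hq L L' hL' N
    hN hN1 u
end

section
/- Let Q : L²(μ) → L²(μ) be a bounded linear operator and q ∈ (0,1) be such that for all nonempty L, L' ⊆ 𝒯 and all u ∈ L²(μ): ‖1_L · Q(1_{L'} · u)‖₂ ≤ 2·q^{max(δ(L,L')−1, 0)}·‖1_{L'} · u‖₂. Let γ ≥ 1 be a real with γ·q < 1, and let ρ : Ω → ℝ be a measurable function such that for every T ∈ 𝒯: 0 < essinf_{A_T} ρ ≤ esssup_{A_T} ρ < ∞ and esssup_{A_T} ρ ≤ γ·essinf_{A_T} ρ, and such that esssup_{A_{T'}} ρ ≤ γ^{δ(T,T')}·esssup_{A_T}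 ρ for all T, T' ∈ 𝒯. Then ‖ρ·Qu‖₂ ≤ (6·γ³/(1 − γ·q))·‖ρ·u‖₂ for all u ∈ L²(μ). -/
/-!
Round `ρ` on each tile to a power of `γ`: if `γ ^ ℓ T ≤ esssup_{A T} ρ < γ ^ (ℓ T + 1)`, the grading
makes the level `ℓ` `1`-Lipschitz for `δ`, and grouping the tiles by level cuts `Ω` into bands
`E j` on which `ρ` lies between `c γ ^ (j - 2)` and `c γ ^ j`. Between the bands `j` and `j'` the
operator `Q` decays like `q ^ (|j - j'| - 1)` while the weights differ by at most `γ ^ |j - j'|`,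
so the band-to-band norms of `ρ Q ρ⁻¹` are dominated by the Toeplitz kernel
`2 γ³ (γ q) ^ (|j - j'| - 1)`, whose row sums are at most `6 γ³ / (1 - γ q)`. Since the bands are
orthogonal, Schur's test concludes.
-/

open MeasureTheory

open Finset in
lemma sum_pow_natAbs_sub_sub_one_le {x : ℝ} (hx0 : 0 ≤ x) (hx1 : x < 1) (j : ℤ) (J : Finset ℤ) :
    ∑ j' ∈ J, x ^ ((j - j').natAbs - 1) ≤ 3 / (1 - x) := by
  classical
  -- the exponent `n` is attained at most at `j' = j ± (n + 1)` and, if `n = 0`, at `j' = j`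
  have hfiber : ∀ n : ℕ, #{j' ∈ J | (j - j').natAbs - 1 = n} ≤ 3 := fun n =>
    (card_le_card (t := {j - (n + 1), j + (n + 1), j}) fun j' hj' => by
      simp only [mem_filter] at hj'
      simp only [mem_insert, mem_singleton]
      omega).trans card_le_three
  rw [sum_comp (fun n => x ^ n) (fun j' => (j - j').natAbs - 1)]
  calc ∑ n ∈ J.image (fun j' => (j - j').natAbs - 1), #{j' ∈ J | (j - j').natAbs - 1 = n} • x ^ n
      ≤ ∑ n ∈ J.image (fun j' => (j - j').natAbs - 1), 3 * x ^ n := by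
        gcongr with n
        rw [nsmul_eq_mul]
        gcongr
        exact_mod_cast hfiber n
    _ ≤ 3 * ∑' n, x ^ n := by
        rw [← mul_sum]
        gcongr
        exact (summable_geometric_of_lt_one hx0 hx1).sum_le_tsum _ fun n _ => pow_nonneg hx0 n
    _ = 3 / (1 - x) := by rw [tsum_geometric_of_lt_one hx0 hx1, div_eq_mul_inv]

lemma sum_band_kernel_le {γ q : ℝ} (hγ : 1 ≤ γ) (hq : 0 ≤ q) (hγq : γ * q < 1) (j : ℤ)
    (J : Finset ℤ) :
    ∑ j' ∈ J, 2 * γ ^ 3 * (γ * q) ^ ((j - j').natAbs - 1) ≤ 6 * γ ^ 3 / (1 - γ * q) := by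
  have hγ0 : 0 ≤ γ := zero_le_one.trans hγ
  rw [← Finset.mul_sum]
  calc 2 * γ ^ 3 * ∑ j' ∈ J, (γ * q) ^ ((j - j').natAbs - 1)
      ≤ 2 * γ ^ 3 * (3 / (1 - γ * q)) := by
        gcongr
        exact sum_pow_natAbs_sub_sub_one_le (by positivity) hγq j J
    _ = 6 * γ ^ 3 / (1 - γ * q) := by ring

open Finset in
theorem schur_test {ι : Type*} (J : Finset ι) (K : ι → ι → ℝ) (r : ι → ℝ) {C : ℝ} (hC : 0 ≤ C)
    (hK : ∀ j ∈ J, ∀ j' ∈ J, 0 ≤ K j j')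
    (hrow : ∀ j ∈ J, ∑ j' ∈ J, K j j' ≤ C) (hcol : ∀ j' ∈ J, ∑ j ∈ J, K j j' ≤ C) :
    ∑ j ∈ J, (∑ j' ∈ J, K j j' * r j') ^ 2 ≤ C ^ 2 * ∑ j ∈ J, r j ^ 2 :=
  calc ∑ j ∈ J, (∑ j' ∈ J, K j j' * r j') ^ 2
      ≤ ∑ j ∈ J, (∑ j' ∈ J, K j j') * ∑ j' ∈ J, K j j' * r j' ^ 2 := by
        gcongr with j hj
        exact sum_sq_le_sum_mul_sum_of_sq_le_mul J (hK j hj)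
          (fun j' hj' => mul_nonneg (hK j hj j' hj') (sq_nonneg _)) fun j' _ => le_of_eq (by ring)
    _ ≤ ∑ j ∈ J, C * ∑ j' ∈ J, K j j' * r j' ^ 2 := by
        gcongr with j hj
        · exact sum_nonneg fun j' hj' => mul_nonneg (hK j hj j' hj') (sq_nonneg _)
        · exact hrow j hj
    _ = C * ∑ j' ∈ J, (∑ j ∈ J, K j j') * r j' ^ 2 := by
        simp_rw [← mul_sum, sum_mul]
        rw [sum_comm]
    _ ≤ C * ∑ j' ∈ J, C * r j' ^ 2 := by
        gcongr with j' hj'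
        exact hcol j' hj'
    _ = C ^ 2 * ∑ j ∈ J, r j ^ 2 := by rw [← mul_sum]; ring

lemma norm_sum_sq_eq_sum_norm_sq {H : Type*} [NormedAddCommGroup H] [InnerProductSpace ℝ H]
    {ι : Type*} (J : Finset ι) (f : ι → H)
    (horth : ∀ j ∈ J, ∀ j' ∈ J, j ≠ j' → inner ℝ (f j) (f j') = 0) :
    ‖∑ j ∈ J, f j‖ ^ 2 = ∑ j ∈ J, ‖f j‖ ^ 2 := by
  rw [← real_inner_self_eq_norm_sq, sum_inner]
  refine Finset.sum_congr rfl fun j hj => ?_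
  rw [inner_sum, Finset.sum_eq_single j (fun j' hj' hne => horth j hj j' hj' hne.symm)
    (absurd hj), real_inner_self_eq_norm_sq]

section IndicatorMultiplication

variable {Ω : Type*} [MeasurableSpace Ω] {μ : Measure Ω}

lemma indMul_ae_eq (s : Set Ω) (hs : MeasurableSet s) (u : Lp ℝ 2 μ) :
    ⇑(indMul s hs u) =ᵐ[μ] s.indicator u :=
  MemLp.coeFn_toLp _

lemma indMul_add (s : Set Ω) (hs : MeasurableSet s) (u v : Lp ℝ 2 μ) :
    indMul s hs (u + v) = indMul s hs u + indMul s hs v := by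
  rw [indMul, indMul, indMul, ← MemLp.toLp_add]
  refine MemLp.toLp_congr _ _ ?_
  filter_upwards [Lp.coeFn_add u v] with x hx
  by_cases hxs : x ∈ s
  · simp only [Pi.add_apply, Set.indicator_of_mem hxs, hx]
  · simp only [Pi.add_apply, Set.indicator_of_notMem hxs, add_zero]

lemma indMul_sum {ι : Type*} (s : Set Ω) (hs : MeasurableSet s) (J : Finset ι)
    (v : ι → Lp ℝ 2 μ) : indMul s hs (∑ j ∈ J, v j) = ∑ j ∈ J, indMul s hs (v j) :=
  map_sum (AddMonoidHom.mk' (indMul s hs) (indMul_add s hs)) v J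

lemma norm_indMul_le_mul_of_ae {s : Set Ω} (hs : MeasurableSet s) {f g : Lp ℝ 2 μ} {c : ℝ}
    (h : ∀ᵐ x ∂μ, x ∈ s → ‖f x‖ ≤ c * ‖g x‖) :
    ‖indMul s hs f‖ ≤ c * ‖indMul s hs g‖ := by
  refine Lp.norm_le_mul_norm_of_ae_le_mul ?_
  filter_upwards [h, indMul_ae_eq s hs f, indMul_ae_eq s hs g] with x hx hf hg
  rw [hf, hg]
  by_cases hxs : x ∈ s
  · simpa [hxs] using hx hxs
  · simp [hxs]

lemma inner_indMul_eq_zero {s t : Set Ω} (hs : MeasurableSet s) (ht : MeasurableSet t)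
    (hst : Disjoint s t) (v w : Lp ℝ 2 μ) :
    inner ℝ (indMul s hs v) (indMul t ht w) = 0 := by
  rw [L2.inner_def, ← integral_zero Ω ℝ]
  refine integral_congr_ae ?_
  filter_upwards [indMul_ae_eq s hs v, indMul_ae_eq t ht w] with x hv hw
  rw [hv, hw]
  by_cases hxs : x ∈ s
  · simp [Set.indicator_of_notMem (Set.disjoint_left.1 hst hxs)]
  · simp [Set.indicator_of_notMem hxs]

variable {ι : Type*} (E : ι → Set Ω) (hE : ∀ j, MeasurableSet (E j)) (J : Finset ι)

lemma sum_indMul_eq_self (hdisj : Pairwise (Function.onFun Disjoint E))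
    (hcov : ∀ᵐ x ∂μ, ∃ j ∈ J, x ∈ E j) (w : Lp ℝ 2 μ) :
    ∑ j ∈ J, indMul (E j) (hE j) w = w := by
  refine Lp.ext ?_
  have hind : ∀ᵐ x ∂μ, ∀ j ∈ J, indMul (E j) (hE j) w x = (E j).indicator w x :=
    (Filter.eventually_all_finset J).2 fun j _ => indMul_ae_eq (E j) (hE j) w
  filter_upwards [Lp.coeFn_fun_finsetSum J fun j => indMul (E j) (hE j) w, hind, hcov]
    with x hsum hind ⟨j, hj, hxj⟩
  rw [hsum, Finset.sum_congr rfl hind, Finset.sum_eq_single j, Set.indicator_of_mem hxj]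
  · exact fun j' _ hne => Set.indicator_of_notMem (Set.disjoint_left.1 (hdisj hne.symm) hxj) _
  · exact absurd hj

lemma norm_sq_eq_sum_norm_indMul_sq (hdisj : Pairwise (Function.onFun Disjoint E))
    (hcov : ∀ᵐ x ∂μ, ∃ j ∈ J, x ∈ E j) (w : Lp ℝ 2 μ) :
    ‖w‖ ^ 2 = ∑ j ∈ J, ‖indMul (E j) (hE j) w‖ ^ 2 := by
  conv_lhs => rw [← sum_indMul_eq_self E hE J hdisj hcov w]
  exact norm_sum_sq_eq_sum_norm_sq J _ fun j _ j' _ hne =>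
    inner_indMul_eq_zero (hE j) (hE j') (hdisj hne) w w

theorem norm_le_of_band_bound (hdisj : Pairwise (Function.onFun Disjoint E))
    (hcov : ∀ᵐ x ∂μ, ∃ j ∈ J, x ∈ E j) (K : ι → ι → ℝ) {C : ℝ} (hC : 0 ≤ C)
    (hK : ∀ j ∈ J, ∀ j' ∈ J, 0 ≤ K j j')
    (hrow : ∀ j ∈ J, ∑ j' ∈ J, K j j' ≤ C) (hcol : ∀ j' ∈ J, ∑ j ∈ J, K j j' ≤ C)
    {f g : Lp ℝ 2 μ}
    (hband : ∀ j ∈ J, ‖indMul (E j) (hE j) f‖ ≤ ∑ j' ∈ J, K j j' * ‖indMul (E j') (hE j') g‖) :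
    ‖f‖ ≤ C * ‖g‖ := by
  refine (pow_le_pow_iff_left₀ (norm_nonneg f) (by positivity) two_ne_zero).1 ?_
  calc ‖f‖ ^ 2 = ∑ j ∈ J, ‖indMul (E j) (hE j) f‖ ^ 2 :=
        norm_sq_eq_sum_norm_indMul_sq E hE J hdisj hcov f
    _ ≤ ∑ j ∈ J, (∑ j' ∈ J, K j j' * ‖indMul (E j') (hE j') g‖) ^ 2 := by
        gcongr with j hj
        exact hband j hj
    _ ≤ C ^ 2 * ∑ j ∈ J, ‖indMul (E j) (hE j) g‖ ^ 2 := schur_test J K _ hC hK hrow hcol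
    _ = (C * ‖g‖) ^ 2 := by rw [← norm_sq_eq_sum_norm_indMul_sq E hE J hdisj hcov g, mul_pow]

end IndicatorMultiplication

section WeightedBands

variable {Ω : Type*} [MeasurableSpace Ω] {μ : Measure Ω}

lemma memLp_mul_of_ae_abs_le {ρ : Ω → ℝ} (hρ : Measurable ρ) {B : ℝ}
    (hB : ∀ᵐ x ∂μ, |ρ x| ≤ B) (w : Lp ℝ 2 μ) : MemLp (fun x => ρ x * w x) 2 μ :=
  (Lp.memLp w).mul' (memLp_top_of_bound hρ.aestronglyMeasurable B hB)

lemma eLpNorm_eq_ofReal_norm_toLp {f : Ω → ℝ} (hf : MemLp f 2 μ) :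
    eLpNorm f 2 μ = ENNReal.ofReal ‖hf.toLp f‖ := by
  rw [Lp.norm_toLp, ENNReal.ofReal_toReal hf.eLpNorm_ne_top]

variable {s : Set Ω} (hs : MeasurableSet s) {ρ : Ω → ℝ} {w : Lp ℝ 2 μ}
  (hmem : MemLp (fun x => ρ x * w x) 2 μ)

lemma norm_indMul_toLp_mul_le {W : ℝ} (hW : ∀ᵐ x ∂μ, x ∈ s → |ρ x| ≤ W) :
    ‖indMul s hs (hmem.toLp _)‖ ≤ W * ‖indMul s hs w‖ := by
  refine norm_indMul_le_mul_of_ae hs ?_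
  filter_upwards [hW, hmem.coeFn_toLp] with x hx hρw hxs
  rw [hρw, norm_mul, Real.norm_eq_abs]
  gcongr
  exact hx hxs

lemma mul_norm_indMul_le_toLp {W a : ℝ} (hW : 0 < W) (ha : 0 ≤ a)
    (hWρ : ∀ᵐ x ∂μ, x ∈ s → W ≤ a * ρ x) :
    W * ‖indMul s hs w‖ ≤ a * ‖indMul s hs (hmem.toLp _)‖ := by
  rw [← le_div_iff₀' hW, mul_div_right_comm]
  refine norm_indMul_le_mul_of_ae hs ?_
  filter_upwards [hWρ, hmem.coeFn_toLp] with x hx hρw hxs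
  rw [hρw, norm_mul, div_mul_eq_mul_div, le_div_iff₀' hW, ← mul_assoc]
  refine mul_le_mul_of_nonneg_right ((hx hxs).trans ?_) (norm_nonneg _)
  exact mul_le_mul_of_nonneg_left (Real.le_norm_self _) ha

end WeightedBands

section BandDecay

variable {Ω : Type*} [MeasurableSpace Ω] {μ : Measure Ω}
  (E : ℤ → Set Ω) (hE : ∀ j, MeasurableSet (E j)) (J : Finset ℤ)

lemma norm_indMul_le_sum_of_band_decay (hdisj : Pairwise (Function.onFun Disjoint E))
    (hcov : ∀ᵐ x ∂μ, ∃ j ∈ J, x ∈ E j) (Q : Lp ℝ 2 μ →L[ℝ] Lp ℝ 2 μ) {q : ℝ} (hq : 0 ≤ q)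
    (hdecay : ∀ j ∈ J, ∀ j' ∈ J, ∀ v : Lp ℝ 2 μ,
      ‖indMul (E j) (hE j) (Q (indMul (E j') (hE j') v))‖
        ≤ 2 * q ^ ((j - j').natAbs - 1) * ‖indMul (E j') (hE j') v‖)
    {γ : ℝ} (hγ : 1 ≤ γ) {c : ℝ} (hc : 0 ≤ c) {u F G : Lp ℝ 2 μ}
    (hF : ∀ j, ‖indMul (E j) (hE j) F‖ ≤ c * γ ^ j * ‖indMul (E j) (hE j) (Q u)‖)
    (hG : ∀ j, c * γ ^ j * ‖indMul (E j) (hE j) u‖ ≤ γ ^ 2 * ‖indMul (E j) (hE j) G‖)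
    {j : ℤ} (hj : j ∈ J) :
    ‖indMul (E j) (hE j) F‖
      ≤ ∑ j' ∈ J, 2 * γ ^ 3 * (γ * q) ^ ((j - j').natAbs - 1) * ‖indMul (E j') (hE j') G‖ := by
  have hγ0 : 0 < γ := one_pos.trans_le hγ
  have hterm : ∀ j' ∈ J,
      c * γ ^ j * ‖indMul (E j) (hE j) (Q (indMul (E j') (hE j') u))‖
        ≤ 2 * γ ^ 3 * (γ * q) ^ ((j - j').natAbs - 1) * ‖indMul (E j') (hE j') G‖ := by
    intro j' hj'
    set n := (j - j').natAbs
    have hγn : γ ^ j ≤ γ ^ n * γ ^ j' := by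
      rw [← zpow_natCast, ← zpow_add₀ hγ0.ne']
      exact zpow_le_zpow_right₀ hγ (by omega)
    calc c * γ ^ j * ‖indMul (E j) (hE j) (Q (indMul (E j') (hE j') u))‖
        ≤ c * (γ ^ n * γ ^ j') * (2 * q ^ (n - 1) * ‖indMul (E j') (hE j') u‖) := by
          gcongr
          exact hdecay j hj j' hj' u
      _ = 2 * q ^ (n - 1) * γ ^ n * (c * γ ^ j' * ‖indMul (E j') (hE j') u‖) := by ring
      _ ≤ 2 * q ^ (n - 1) * γ ^ n * (γ ^ 2 * ‖indMul (E j') (hE j') G‖) :=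
          mul_le_mul_of_nonneg_left (hG j') (by positivity)
      _ = 2 * q ^ (n - 1) * γ ^ (n + 2) * ‖indMul (E j') (hE j') G‖ := by ring
      _ ≤ 2 * q ^ (n - 1) * γ ^ (n - 1 + 3) * ‖indMul (E j') (hE j') G‖ := by
          gcongr 2 * q ^ (n - 1) * ?_ * _
          exact pow_le_pow_right₀ hγ (by omega)
      _ = 2 * γ ^ 3 * (γ * q) ^ (n - 1) * ‖indMul (E j') (hE j') G‖ := by ring
  calc ‖indMul (E j) (hE j) F‖ ≤ c * γ ^ j * ‖indMul (E j) (hE j) (Q u)‖ := hF j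
    _ = c * γ ^ j * ‖∑ j' ∈ J, indMul (E j) (hE j) (Q (indMul (E j') (hE j') u))‖ := by
        rw [← indMul_sum, ← map_sum, sum_indMul_eq_self E hE J hdisj hcov]
    _ ≤ ∑ j' ∈ J, c * γ ^ j * ‖indMul (E j) (hE j) (Q (indMul (E j') (hE j') u))‖ := by
        rw [← Finset.mul_sum]
        gcongr
        exact norm_sum_le _ _
    _ ≤ _ := Finset.sum_le_sum hterm

theorem eLpNorm_mul_le_of_band_decay (hdisj : Pairwise (Function.onFun Disjoint E))
    (hcov : ∀ᵐ x ∂μ, ∃ j ∈ J, x ∈ E j) (Q : Lp ℝ 2 μ →L[ℝ] Lp ℝ 2 μ) {q : ℝ} (hq : 0 ≤ q)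
    (hdecay : ∀ j ∈ J, ∀ j' ∈ J, ∀ v : Lp ℝ 2 μ,
      ‖indMul (E j) (hE j) (Q (indMul (E j') (hE j') v))‖
        ≤ 2 * q ^ ((j - j').natAbs - 1) * ‖indMul (E j') (hE j') v‖)
    {γ : ℝ} (hγ : 1 ≤ γ) (hγq : γ * q < 1) {ρ : Ω → ℝ} (hρ : Measurable ρ) {c : ℝ} (hc : 0 < c)
    (hupper : ∀ j, ∀ᵐ x ∂μ, x ∈ E j → ρ x ≤ c * γ ^ j)
    (hlower : ∀ j, ∀ᵐ x ∂μ, x ∈ E j → c * γ ^ j ≤ γ ^ 2 * ρ x) (u : Lp ℝ 2 μ) :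
    eLpNorm (fun x => ρ x * Q u x) 2 μ
      ≤ ENNReal.ofReal (6 * γ ^ 3 / (1 - γ * q)) * eLpNorm (fun x => ρ x * u x) 2 μ := by
  have hγ0 : 0 < γ := one_pos.trans_le hγ
  have hρ_abs : ∀ j, ∀ᵐ x ∂μ, x ∈ E j → |ρ x| ≤ c * γ ^ j := by
    intro j
    filter_upwards [hupper j, hlower j] with x hup hlo hx
    have hρx : 0 < ρ x := pos_of_mul_pos_right ((by positivity : 0 < c * γ ^ j).trans_le
      (hlo hx)) (by positivity)
    exact (abs_of_pos hρx).trans_le (hup hx)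
  have hmem := memLp_mul_of_ae_abs_le hρ (B := ∑ j ∈ J, c * γ ^ j) (by
    filter_upwards [ae_all_iff.2 hρ_abs, hcov] with x hx ⟨j, hj, hxj⟩
    exact (hx j hxj).trans (Finset.single_le_sum (f := fun j => c * γ ^ j)
      (fun j _ => by positivity) hj))
  have hC : 0 ≤ 6 * γ ^ 3 / (1 - γ * q) := div_nonneg (by positivity) (by linarith)
  have hFG := norm_le_of_band_bound E hE J hdisj hcov _ hC (fun _ _ _ _ => by positivity)
    (fun j _ => sum_band_kernel_le hγ hq hγq j J)
    (fun j' _ => (Finset.sum_congr rfl fun j _ => by rw [← Int.natAbs_neg, neg_sub]).trans_le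
      (sum_band_kernel_le hγ hq hγq j' J))
    fun j hj => norm_indMul_le_sum_of_band_decay E hE J hdisj hcov Q hq hdecay hγ hc.le
      (fun j => norm_indMul_toLp_mul_le (hE j) (hmem (Q u)) (hρ_abs j))
      (fun j => mul_norm_indMul_le_toLp (hE j) (hmem u) (by positivity) (by positivity) (hlower j))
      hj
  rw [eLpNorm_eq_ofReal_norm_toLp (hmem (Q u)), eLpNorm_eq_ofReal_norm_toLp (hmem u),
    ← ENNReal.ofReal_mul hC]
  exact ENNReal.ofReal_le_ofReal hFG

end BandDecay

section Tiles

variable {𝒯 ι : Type*}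

lemma le_setDist {δ : 𝒯 → 𝒯 → ℕ} {L L' : Set 𝒯} {n : ℕ} (hL : L.Nonempty) (hL' : L'.Nonempty)
    (h : ∀ T ∈ L, ∀ T' ∈ L', n ≤ δ T T') : n ≤ setDist δ L L' := by
  obtain ⟨T, hT⟩ := hL
  obtain ⟨T', hT'⟩ := hL'
  refine le_csInf ⟨δ T T', T, hT, T', hT', rfl⟩ ?_
  rintro _ ⟨T, hT, T', hT', rfl⟩
  exact h T hT T' hT'

lemma exists_zpow_levels [Nonempty 𝒯] {δ : 𝒯 → 𝒯 → ℕ} (hδsymm : ∀ T T', δ T T' = δ T' T)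
    {γ : ℝ} (hγ : 1 ≤ γ) {M : 𝒯 → ℝ} (hM : ∀ T, 0 < M T)
    (hgrad : ∀ T T', M T' ≤ γ ^ δ T T' * M T) :
    ∃ c > 0, ∃ ℓ : 𝒯 → ℤ, (∀ T, M T ≤ c * γ ^ ℓ T ∧ c * γ ^ ℓ T ≤ γ * M T) ∧
      ∀ T T', (ℓ T - ℓ T').natAbs ≤ δ T T' := by
  rcases hγ.eq_or_lt with rfl | hγ1
  · obtain ⟨T₀⟩ := ‹Nonempty 𝒯›
    simp only [one_pow, one_mul] at hgrad
    exact ⟨M T₀, hM T₀, fun _ => 0, fun T => by simpa using ⟨hgrad T₀ T, hgrad T T₀⟩, by simp⟩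
  · have hγ0 : 0 < γ := one_pos.trans hγ1
    choose ℓ hℓ using fun T => exists_mem_Ico_zpow (hM T) hγ1
    have hstep : ∀ T T', ℓ T' < δ T T' + ℓ T + 1 := by
      intro T T'
      rw [← zpow_lt_zpow_iff_right₀ hγ1, add_assoc, zpow_add₀ hγ0.ne', zpow_natCast]
      calc γ ^ ℓ T' ≤ M T' := (hℓ T').1
        _ ≤ γ ^ δ T T' * M T := hgrad T T'
        _ < γ ^ δ T T' * γ ^ (ℓ T + 1) := by gcongr; exact (hℓ T).2
    refine ⟨γ, hγ0, ℓ, fun T => ⟨?_, ?_⟩, fun T T' => ?_⟩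
    · rw [mul_comm, ← zpow_add_one₀ hγ0.ne']
      exact (hℓ T).2.le
    · gcongr
      exact (hℓ T).1
    · have h₁ := hstep T T'
      have h₂ := hstep T' T
      rw [hδsymm T' T] at h₂
      omega

lemma pairwise_disjoint_biUnion_fiber {Ω : Type*} {A : 𝒯 → Set Ω} (ℓ : 𝒯 → ι)
    (hA : Pairwise (Function.onFun Disjoint A)) :
    Pairwise (Function.onFun Disjoint fun j => ⋃ T ∈ ℓ ⁻¹' {j}, A T) := by
  intro j j' hjj'
  simp only [Function.onFun, Set.disjoint_iUnion_left, Set.disjoint_iUnion_right]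
  rintro T rfl T' rfl
  exact hA fun h => hjj' (congrArg ℓ h)

variable {Ω : Type*} [MeasurableSpace Ω] {μ : Measure Ω} {A : 𝒯 → Set Ω} (ℓ : 𝒯 → ι)

-- In `ℝ`, the essential supremum of a function that is not essentially bounded above is the junk
-- value `0`, and dually for the essential infimum.
lemma ae_le_essSup_of_ne_zero {f : Ω → ℝ} (h : essSup f μ ≠ 0) : ∀ᵐ x ∂μ, f x ≤ essSup f μ :=
  ae_le_essSup (not_not.1 fun hf => h (Real.limsup_of_not_isBoundedUnder hf))

lemma ae_essInf_le_of_ne_zero {f : Ω → ℝ} (h : essInf f μ ≠ 0) : ∀ᵐ x ∂μ, essInf f μ ≤ f x :=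
  ae_essInf_le (not_not.1 fun hf => h (Real.liminf_of_not_isBoundedUnder hf))

lemma ae_exists_mem_biUnion_fiber [Fintype 𝒯] [DecidableEq ι]
    (hcover : μ (Set.univ \ ⋃ T, A T) = 0) :
    ∀ᵐ x ∂μ, ∃ j ∈ Finset.univ.image ℓ, x ∈ ⋃ T ∈ ℓ ⁻¹' {j}, A T := by
  filter_upwards [measure_eq_zero_iff_ae_notMem.1 hcover] with x hx
  obtain ⟨T, hxT⟩ : ∃ T, x ∈ A T := by simpa using hx
  exact ⟨ℓ T, Finset.mem_image_of_mem ℓ (Finset.mem_univ T), Set.mem_biUnion rfl hxT⟩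

lemma ae_imp_of_mem_biUnion_fiber [Countable 𝒯] (hA : ∀ T, MeasurableSet (A T))
    {P : ι → Ω → Prop} (h : ∀ T, ∀ᵐ x ∂μ.restrict (A T), P (ℓ T) x) (j : ι) :
    ∀ᵐ x ∂μ, x ∈ ⋃ T ∈ ℓ ⁻¹' {j}, A T → P j x := by
  filter_upwards [ae_all_iff.2 fun T => (ae_restrict_iff' (hA T)).1 (h T)] with x hx hxj
  obtain ⟨T, hT, hxT⟩ := Set.mem_iUnion₂.1 hxj
  exact hT ▸ hx T hxT

end Tiles

theorem stmt_2_general {Ω : Type*} [MeasurableSpace Ω] (μ : Measure Ω)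
    {𝒯 : Type*} [Fintype 𝒯] [Nonempty 𝒯]
    (A : 𝒯 → Set Ω) (hAmeas : ∀ T, MeasurableSet (A T))
    (hdisj : Pairwise (Function.onFun Disjoint A))
    (hcover : μ (Set.univ \ ⋃ T, A T) = 0)
    (δ : 𝒯 → 𝒯 → ℕ)
    (hδsymm : ∀ T T', δ T T' = δ T' T)
    (Q : Lp ℝ 2 μ →L[ℝ] Lp ℝ 2 μ)
    (q : ℝ) (hq0 : 0 < q) (hq1 : q < 1)
    (hdecay : ∀ (L L' : Set 𝒯), L.Nonempty → L'.Nonempty → ∀ u : Lp ℝ 2 μ,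
      ‖indMul (⋃ T ∈ L, A T) (unionMeasurable hAmeas L)
          (Q (indMul (⋃ T ∈ L', A T) (unionMeasurable hAmeas L') u))‖
        ≤ 2 * q ^ (setDist δ L L' - 1)
          * ‖indMul (⋃ T ∈ L', A T) (unionMeasurable hAmeas L') u‖)
    (γ : ℝ) (hγ : 1 ≤ γ) (hγq : γ * q < 1)
    (ρ : Ω → ℝ) (hρmeas : Measurable ρ)
    (hρ0 : ∀ T, 0 < essInf ρ (μ.restrict (A T)))
    (hρle : ∀ T, essInf ρ (μ.restrict (A T)) ≤ essSup ρ (μ.restrict (A T)))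
    (hρgrad : ∀ T, essSup ρ (μ.restrict (A T)) ≤ γ * essInf ρ (μ.restrict (A T)))
    (hρgrad' : ∀ T T', essSup ρ (μ.restrict (A T'))
      ≤ γ ^ δ T T' * essSup ρ (μ.restrict (A T)))
    (u : Lp ℝ 2 μ) :
    eLpNorm (fun x => ρ x * (Q u : Ω → ℝ) x) 2 μ
      ≤ ENNReal.ofReal (6 * γ ^ 3 / (1 - γ * q))
        * eLpNorm (fun x => ρ x * (u : Ω → ℝ) x) 2 μ := by
  set M : 𝒯 → ℝ := fun T => essSup ρ (μ.restrict (A T))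
  have hM : ∀ T, 0 < M T := fun T => (hρ0 T).trans_le (hρle T)
  obtain ⟨c, hc, ℓ, hℓM, hℓδ⟩ := exists_zpow_levels hδsymm hγ hM hρgrad'
  have hγ0 : 0 ≤ γ := zero_le_one.trans hγ
  refine eLpNorm_mul_le_of_band_decay (fun j => ⋃ T ∈ ℓ ⁻¹' {j}, A T)
    (fun j => unionMeasurable hAmeas _) (Finset.univ.image ℓ)
    (pairwise_disjoint_biUnion_fiber ℓ hdisj) (ae_exists_mem_biUnion_fiber ℓ hcover) Q hq0.le
    ?_ hγ hγq hρmeas hc (ae_imp_of_mem_biUnion_fiber ℓ hAmeas fun T => ?_)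
    (ae_imp_of_mem_biUnion_fiber ℓ hAmeas fun T => ?_) u
  · intro j hj j' hj' v
    obtain ⟨T, -, rfl⟩ := Finset.mem_image.1 hj
    obtain ⟨T', -, rfl⟩ := Finset.mem_image.1 hj'
    refine (hdecay (ℓ ⁻¹' {ℓ T}) (ℓ ⁻¹' {ℓ T'}) ⟨T, rfl⟩ ⟨T', rfl⟩ v).trans ?_
    gcongr 2 * ?_ * _
    refine pow_le_pow_of_le_one hq0.le hq1.le (Nat.sub_le_sub_right ?_ 1)
    refine le_setDist ⟨T, rfl⟩ ⟨T', rfl⟩ fun S hS S' hS' => ?_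
    rw [← show ℓ S = ℓ T from hS, ← show ℓ S' = ℓ T' from hS']
    exact hℓδ S S'
  · filter_upwards [ae_le_essSup_of_ne_zero (hM T).ne'] with x hx
    exact hx.trans (hℓM T).1
  · filter_upwards [ae_essInf_le_of_ne_zero (hρ0 T).ne'] with x hx
    calc c * γ ^ ℓ T ≤ γ * M T := (hℓM T).2
      _ ≤ γ * (γ * ρ x) := by gcongr; exact (hρgrad T).trans (by gcongr)
      _ = γ ^ 2 * ρ x := by ring

/-- Weighted `L²`-stability.  If a bounded linear operator `Q` on `L²(μ)`
satisfies the decay estimate `‖1_L Q(1_{L'} u)‖₂ ≤ 2 q^{max(δ(L,L')−1,0)} ‖1_{L'} u‖₂` with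
`q ∈ (0,1)`, and `ρ` is a weight with grading `γ ≥ 1` such that `γ q < 1`, then
`‖ρ Q u‖₂ ≤ (6 γ³/(1 − γ q)) ‖ρ u‖₂` for all `u ∈ L²(μ)`. -/
theorem stmt_2 {Ω : Type*} [MeasurableSpace Ω] (μ : Measure Ω)
    {𝒯 : Type*} [Fintype 𝒯] [Nonempty 𝒯]
    (A : 𝒯 → Set Ω) (hAmeas : ∀ T, MeasurableSet (A T))
    (hdisj : Pairwise (Function.onFun Disjoint A))
    (hApos : ∀ T, 0 < μ (A T))
    (hcover : μ (Set.univ \ ⋃ T, A T) = 0)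
    (δ : 𝒯 → 𝒯 → ℕ)
    (hδ0 : ∀ T T', δ T T' = 0 ↔ T = T')
    (hδsymm : ∀ T T', δ T T' = δ T' T)
    (hδtri : ∀ T T' T'', δ T T'' ≤ δ T T' + δ T' T'')
    (Q : Lp ℝ 2 μ →L[ℝ] Lp ℝ 2 μ)
    (q : ℝ) (hq0 : 0 < q) (hq1 : q < 1)
    (hdecay : ∀ (L L' : Set 𝒯), L.Nonempty → L'.Nonempty → ∀ u : Lp ℝ 2 μ,
      ‖indMul (⋃ T ∈ L, A T) (unionMeasurable hAmeas L)
          (Q (indMul (⋃ T ∈ L', A T) (unionMeasurable hAmeas L') u))‖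
        ≤ 2 * q ^ (setDist δ L L' - 1)
          * ‖indMul (⋃ T ∈ L', A T) (unionMeasurable hAmeas L') u‖)
    (γ : ℝ) (hγ : 1 ≤ γ) (hγq : γ * q < 1)
    (ρ : Ω → ℝ) (hρmeas : Measurable ρ)
    (hρ0 : ∀ T, 0 < essInf ρ (μ.restrict (A T)))
    (hρle : ∀ T, essInf ρ (μ.restrict (A T)) ≤ essSup ρ (μ.restrict (A T)))
    (hρgrad : ∀ T, essSup ρ (μ.restrict (A T)) ≤ γ * essInf ρ (μ.restrict (A T)))
    (hρgrad' : ∀ T T', essSup ρ (μ.restrict (A T'))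
      ≤ γ ^ δ T T' * essSup ρ (μ.restrict (A T)))
    (u : Lp ℝ 2 μ) :
    eLpNorm (fun x => ρ x * (Q u : Ω → ℝ) x) 2 μ
      ≤ ENNReal.ofReal (6 * γ ^ 3 / (1 - γ * q))
        * eLpNorm (fun x => ρ x * (u : Ω → ℝ) x) 2 μ :=
  stmt_2_general μ A hAmeas hdisj hcover δ hδsymm Q q hq0 hq1 hdecay γ hγ hγq ρ hρmeas hρ0 hρle
    hρgrad hρgrad' u
end

section
/- Let μ : X → [0,∞), let p ∈ [1,∞) be a real exponent, and let C ≥ 0 be such that ∑_{x∈X} μ(x)·(γ^p)^{−δ(x,y)} ≤ C·μ(y) for every y ∈ X. Then for every v : X → ℝ: ∑_{x∈X} μ(x)·(M_γ(v)(x))^p ≤ C·∑_{x∈X} μ(x)·|v(x)|^p. -/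
/-
The maximum defining `M_γ(v)(x)` is attained at some `y`, so after raising to the power `p` it is
bounded by the full sum `∑_y (γ^p)^{-δ(x,y)} |v(y)|^p`. Integrating against `μ` and exchanging the
two sums puts the weight `∑_x μ(x) (γ^p)^{-δ(x,y)}` in front of `|v(y)|^p`, and that weight is at
most `C μ(y)` by hypothesis.
-/

/-- The maximal function `M_γ(v)(x) := max_{y ∈ X} γ^{−δ(x,y)} |v(y)|`. -/
noncomputable def Mmax {X : Type*} [Fintype X] [Nonempty X]
    (δ : X → X → ℕ) (γ : ℝ) (v : X → ℝ) (x : X) : ℝ :=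
  Finset.univ.sup' Finset.univ_nonempty fun y => (γ ^ δ x y)⁻¹ * |v y|

open Finset

lemma inv_pow_mul_rpow {γ a : ℝ} (hγ : 0 ≤ γ) (ha : 0 ≤ a) (n : ℕ) (p : ℝ) :
    ((γ ^ n)⁻¹ * a) ^ p = ((γ ^ p) ^ n)⁻¹ * a ^ p := by
  rw [Real.mul_rpow (by positivity) ha, Real.inv_rpow (by positivity),
    Real.rpow_pow_comm hγ]

lemma Mmax_rpow_le_sum {X : Type*} [Fintype X] [Nonempty X] (δ : X → X → ℕ) {γ : ℝ}
    (hγ : 0 ≤ γ) (p : ℝ) (v : X → ℝ) (x : X) :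
    Mmax δ γ v x ^ p ≤ ∑ y, ((γ ^ p) ^ δ x y)⁻¹ * |v y| ^ p := by
  obtain ⟨y, -, hy⟩ := exists_mem_eq_sup' univ_nonempty fun y => (γ ^ δ x y)⁻¹ * |v y|
  rw [Mmax, hy, inv_pow_mul_rpow hγ (abs_nonneg _)]
  exact single_le_sum (f := fun z => ((γ ^ p) ^ δ x z)⁻¹ * |v z| ^ p)
    (fun z _ => by positivity) (mem_univ y)

lemma sum_mul_sum_kernel_le {X : Type*} [Fintype X] (μ f : X → ℝ) (K : X → X → ℝ) (C : ℝ)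
    (hf : ∀ y, 0 ≤ f y) (hK : ∀ y, ∑ x, μ x * K x y ≤ C * μ y) :
    ∑ x, μ x * ∑ y, K x y * f y ≤ C * ∑ y, μ y * f y :=
  calc ∑ x, μ x * ∑ y, K x y * f y
      = ∑ y, (∑ x, μ x * K x y) * f y := by
        simp only [mul_sum, sum_mul, mul_assoc]
        exact sum_comm
    _ ≤ ∑ y, C * μ y * f y := sum_le_sum fun y _ => mul_le_mul_of_nonneg_right (hK y) (hf y)
    _ = C * ∑ y, μ y * f y := by simp only [mul_sum, mul_assoc]

theorem stmt_5_general {X : Type*} [Fintype X] [Nonempty X]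
    (δ : X → X → ℕ)
    (γ : ℝ) (hγ : 1 < γ)
    (μ : X → ℝ) (hμ : ∀ x, 0 ≤ μ x)
    (p : ℝ)
    (C : ℝ)
    (hbound : ∀ y, ∑ x, μ x * ((γ ^ p) ^ δ x y)⁻¹ ≤ C * μ y)
    (v : X → ℝ) :
    ∑ x, μ x * (Mmax δ γ v x) ^ p ≤ C * ∑ x, μ x * |v x| ^ p :=
  calc ∑ x, μ x * (Mmax δ γ v x) ^ p
      ≤ ∑ x, μ x * ∑ y, ((γ ^ p) ^ δ x y)⁻¹ * |v y| ^ p :=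
        sum_le_sum fun x _ =>
          mul_le_mul_of_nonneg_left (Mmax_rpow_le_sum δ (by linarith) p v x) (hμ x)
    _ ≤ C * ∑ x, μ x * |v x| ^ p :=
        sum_mul_sum_kernel_le μ _ _ C (fun y => by positivity) hbound

/-- `L^p`-stability of the maximal operator `M_γ`.  Let `μ : X → [0,∞)`,
`p ∈ [1,∞)` and `C ≥ 0` be such that `∑_x μ(x) (γ^p)^{−δ(x,y)} ≤ C μ(y)` for every `y`.
Then `∑_x μ(x) (M_γ(v)(x))^p ≤ C ∑_x μ(x) |v(x)|^p` for every `v : X → ℝ`. -/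
theorem stmt_5 {X : Type*} [Fintype X] [Nonempty X]
    (δ : X → X → ℕ)
    (hδ0 : ∀ x y, δ x y = 0 ↔ x = y)
    (hδsymm : ∀ x y, δ x y = δ y x)
    (hδtri : ∀ x y z, δ x z ≤ δ x y + δ y z)
    (γ : ℝ) (hγ : 1 < γ)
    (μ : X → ℝ) (hμ : ∀ x, 0 ≤ μ x)
    (p : ℝ) (hp : 1 ≤ p)
    (C : ℝ) (hC : 0 ≤ C)
    (hbound : ∀ y, ∑ x, μ x * ((γ ^ p) ^ δ x y)⁻¹ ≤ C * μ y)
    (v : X → ℝ) :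
    ∑ x, μ x * (Mmax δ γ v x) ^ p ≤ C * ∑ x, μ x * |v x| ^ p :=
  stmt_5_general δ γ hγ μ hμ p C hbound v
end

section
/- For every u ∈ L²(μ) one has ⟨Cu, u⟩ ≤ ‖u‖₂². -/
open MeasureTheory RealInnerProductSpace

/-!
Writing `⟨Cu, u⟩ = ∑ᵢ ∫ φᵢ (Cᵢu) u` and `‖u‖² = ∑ᵢ ∫ φᵢ u u` (as `∑ᵢ φᵢ = 1`), it suffices to
compare the summands. Testing the projection identity with `w = Cᵢu` gives
`∫ φᵢ (Cᵢu)² = ∫ φᵢ u (Cᵢu)`, and the pointwise inequality `2ab ≤ a² + b²` weighted by `φᵢ ≥ 0`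
then yields `∫ φᵢ (Cᵢu) u ≤ ∫ φᵢ u²`.
-/

section

variable {Ω : Type*} [MeasurableSpace Ω] {μ : Measure Ω}

lemma L2.real_inner_eq_integral_mul (f g : Lp ℝ 2 μ) : ⟪f, g⟫ = ∫ x, f x * g x ∂μ := by
  simp [L2.inner_def, mul_comm]

lemma L2.integrable_bdd_mul_mul {φ : Ω → ℝ} {c : ℝ} (hφ : AEStronglyMeasurable φ μ)
    (hφ_bound : ∀ᵐ x ∂μ, ‖φ x‖ ≤ c) (f g : Lp ℝ 2 μ) :
    Integrable (fun x => φ x * f x * g x) μ := by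
  have hfg : Integrable (fun x => f x * g x) μ := by
    simpa [mul_comm] using L2.integrable_inner (𝕜 := ℝ) f g
  simpa only [mul_assoc] using hfg.bdd_mul hφ hφ_bound

lemma integral_mul_le_integral_mul_self_of_integral_mul_self_eq {φ f p : Ω → ℝ}
    (hφ : ∀ᵐ x ∂μ, 0 ≤ φ x) (hff : Integrable (fun x => φ x * f x * f x) μ)
    (hpp : Integrable (fun x => φ x * p x * p x) μ)
    (hfp : Integrable (fun x => φ x * f x * p x) μ)
    (hproj : ∫ x, φ x * p x * p x ∂μ = ∫ x, φ x * f x * p x ∂μ) :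
    ∫ x, φ x * p x * f x ∂μ ≤ ∫ x, φ x * f x * f x ∂μ := by
  have hAM : ∫ x, φ x * f x * p x ∂μ
      ≤ (∫ x, φ x * f x * f x ∂μ + ∫ x, φ x * p x * p x ∂μ) / 2 := by
    rw [← integral_add hff hpp, ← integral_div]
    refine integral_mono_ae hfp ((hff.add hpp).div_const 2) ?_
    filter_upwards [hφ] with x hx
    nlinarith [mul_nonneg hx (sq_nonneg (f x - p x))]
  have hcomm : ∫ x, φ x * p x * f x ∂μ = ∫ x, φ x * f x * p x ∂μ := by
    simp only [mul_right_comm _ (p _)]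
  linarith

end

theorem stmt_6_general {Ω : Type*} [MeasurableSpace Ω] (μ : Measure Ω)
    {I : Type*} [Fintype I]
    (φ : I → Ω → ℝ) (hφmeas : ∀ i, Measurable (φ i))
    (hφ0 : ∀ i x, 0 ≤ φ i x) (hφ1 : ∀ i x, φ i x ≤ 1)
    (hφsum : ∀ᵐ x ∂μ, ∑ i, φ i x = 1)
    (V : I → Submodule ℝ (Lp ℝ 2 μ))
    (Ci : I → (Lp ℝ 2 μ →ₗ[ℝ] Lp ℝ 2 μ))
    (hCmem : ∀ i u, Ci i u ∈ V i)
    (hCproj : ∀ i (u : Lp ℝ 2 μ), ∀ w ∈ V i,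
      ∫ x, φ i x * (Ci i u : Ω → ℝ) x * (w : Ω → ℝ) x ∂μ
        = ∫ x, φ i x * (u : Ω → ℝ) x * (w : Ω → ℝ) x ∂μ)
    (C : Lp ℝ 2 μ → Lp ℝ 2 μ)
    (hC : ∀ u : Lp ℝ 2 μ,
      (C u : Ω → ℝ) =ᵐ[μ] fun x => ∑ i, φ i x * (Ci i u : Ω → ℝ) x)
    (u : Lp ℝ 2 μ) :
    ⟪C u, u⟫ ≤ ‖u‖ ^ 2 := by
  have hint : ∀ i (f g : Lp ℝ 2 μ), Integrable (fun x => φ i x * f x * g x) μ := fun i =>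
    L2.integrable_bdd_mul_mul (hφmeas i).aestronglyMeasurable
      (ae_of_all _ fun x => (Real.norm_of_nonneg (hφ0 i x)).trans_le (hφ1 i x))
  calc ⟪C u, u⟫ = ∑ i, ∫ x, φ i x * Ci i u x * u x ∂μ := by
        rw [L2.real_inner_eq_integral_mul, ← integral_finsetSum _ fun i _ => hint i _ _]
        refine integral_congr_ae ?_
        filter_upwards [hC u] with x hx
        simp [hx, Finset.sum_mul]
    _ ≤ ∑ i, ∫ x, φ i x * u x * u x ∂μ := Finset.sum_le_sum fun i _ =>
        integral_mul_le_integral_mul_self_of_integral_mul_self_eq (ae_of_all _ (hφ0 i))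
          (hint i _ _) (hint i _ _) (hint i _ _) (hCproj i u _ (hCmem i u))
    _ = ∫ x, u x * u x ∂μ := by
        rw [← integral_finsetSum _ fun i _ => hint i _ _]
        refine integral_congr_ae ?_
        filter_upwards [hφsum] with x hx
        simp [mul_assoc, ← Finset.sum_mul, hx]
    _ = ‖u‖ ^ 2 := by rw [← L2.real_inner_eq_integral_mul, real_inner_self_eq_norm_sq]

/-- Upper bound for the operator `C`.  Let `(φ_i)_{i∈I}` be a measurable
partition of unity with values in `[0,1]`, let `C_i` be the orthogonal projection onto the
closed subspace `V_i ⊆ L²(μ)` with respect to the weighted inner product `⟨φ_i ·, ·⟩`, and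
let `C u = ∑_i φ_i C_i u`.  Then `⟨Cu, u⟩ ≤ ‖u‖₂²` for every `u ∈ L²(μ)`. -/
theorem stmt_6 {Ω : Type*} [MeasurableSpace Ω] (μ : Measure Ω)
    {I : Type*} [Fintype I]
    (φ : I → Ω → ℝ) (hφmeas : ∀ i, Measurable (φ i))
    (hφ0 : ∀ i x, 0 ≤ φ i x) (hφ1 : ∀ i x, φ i x ≤ 1)
    (hφsum : ∀ᵐ x ∂μ, ∑ i, φ i x = 1)
    (V : I → Submodule ℝ (Lp ℝ 2 μ))
    (hVclosed : ∀ i, IsClosed (V i : Set (Lp ℝ 2 μ)))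
    (Ci : I → (Lp ℝ 2 μ →ₗ[ℝ] Lp ℝ 2 μ))
    (hCmem : ∀ i u, Ci i u ∈ V i)
    (hCproj : ∀ i (u : Lp ℝ 2 μ), ∀ w ∈ V i,
      ∫ x, φ i x * (Ci i u : Ω → ℝ) x * (w : Ω → ℝ) x ∂μ
        = ∫ x, φ i x * (u : Ω → ℝ) x * (w : Ω → ℝ) x ∂μ)
    (C : Lp ℝ 2 μ → Lp ℝ 2 μ)
    (hC : ∀ u : Lp ℝ 2 μ,
      (C u : Ω → ℝ) =ᵐ[μ] fun x => ∑ i, φ i x * (Ci i u : Ω → ℝ) x)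
    (u : Lp ℝ 2 μ) :
    ⟪C u, u⟫ ≤ ‖u‖ ^ 2 :=
  stmt_6_general μ φ hφmeas hφ0 hφ1 hφsum V Ci hCmem hCproj C hC u
end

section
/- Let V ⊆ L²(μ) be a subspace, K₁ > 0 a real, and for each i ∈ I let D_i : V → V_i be a map such that every v ∈ V satisfies v = ∑_{i∈I} φ_i·D_i v μ-a.e. and ∑_{i∈I} ∫_Ω φ_i·|D_i v|² dμ ≤ K₁·‖v‖₂². Then ‖v‖₂² ≤ K₁·⟨Cv, v⟩ for every v ∈ V. -/
open MeasureTheory RealInnerProductSpace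

/-!
Since `v = ∑ᵢ φᵢ Dᵢv` and `Dᵢv ∈ Vᵢ`, the projection property of `Cᵢ` gives
`‖v‖² = ∑ᵢ ∫ φᵢ (Cᵢv)(Dᵢv)`, while the same property with the test function `Cᵢv` gives
`⟨Cv, v⟩ = ∑ᵢ ∫ φᵢ (Cᵢv)²`. The weighted AM-GM inequality `2ab ≤ K₁a² + K₁⁻¹b²` then yields
`2‖v‖² ≤ K₁⟨Cv, v⟩ + K₁⁻¹ ∑ᵢ ∫ φᵢ (Dᵢv)² ≤ K₁⟨Cv, v⟩ + ‖v‖²`.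
-/

theorem two_mul_mul_mul_le {w a b t : ℝ} (hw : 0 ≤ w) (ht : 0 < t) :
    2 * (w * a * b) ≤ t * (w * a ^ 2) + t⁻¹ * (w * b ^ 2) := by
  have hsq : 0 ≤ t⁻¹ * (w * (t * a - b) ^ 2) := by positivity
  have hexpand : t⁻¹ * (w * (t * a - b) ^ 2)
      = t * (w * a ^ 2) - 2 * (w * a * b) + t⁻¹ * (w * b ^ 2) := by
    field_simp
    ring
  linarith

namespace MeasureTheory

variable {Ω : Type*} [MeasurableSpace Ω] {μ : Measure Ω}

theorem L2.real_inner_eq_integral_mul (f g : Lp ℝ 2 μ) :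
    ⟪f, g⟫ = ∫ x, (f : Ω → ℝ) x * (g : Ω → ℝ) x ∂μ := by
  simp only [L2.inner_def, Real.inner_apply]

theorem integral_mul_mul_comm (w f g : Ω → ℝ) :
    ∫ x, w x * f x * g x ∂μ = ∫ x, w x * g x * f x ∂μ := by
  simp_rw [mul_right_comm (w _)]

section Weighted

variable {w : Ω → ℝ} {c : ℝ}

theorem L2.integrable_mul_mul_of_bdd (hw : AEStronglyMeasurable w μ)
    (hbdd : ∀ᵐ x ∂μ, ‖w x‖ ≤ c) (f g : Lp ℝ 2 μ) :
    Integrable (fun x => w x * (f : Ω → ℝ) x * (g : Ω → ℝ) x) μ := by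
  simpa only [mul_assoc, Pi.mul_apply] using
    ((Lp.memLp f).integrable_mul (Lp.memLp g)).bdd_mul hw hbdd

theorem L2.two_mul_integral_mul_mul_le (hw : AEStronglyMeasurable w μ)
    (hbdd : ∀ᵐ x ∂μ, ‖w x‖ ≤ c) (hw0 : ∀ᵐ x ∂μ, 0 ≤ w x) {t : ℝ} (ht : 0 < t)
    (f g : Lp ℝ 2 μ) :
    2 * ∫ x, w x * (f : Ω → ℝ) x * (g : Ω → ℝ) x ∂μ
      ≤ t * ∫ x, w x * (f : Ω → ℝ) x ^ 2 ∂μ + t⁻¹ * ∫ x, w x * (g : Ω → ℝ) x ^ 2 ∂μ := by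
  have hsq (h : Lp ℝ 2 μ) : Integrable (fun x => w x * (h : Ω → ℝ) x ^ 2) μ := by
    simpa only [sq, mul_assoc] using L2.integrable_mul_mul_of_bdd hw hbdd h h
  rw [← integral_const_mul, ← integral_const_mul, ← integral_const_mul,
    ← integral_add ((hsq f).const_mul _) ((hsq g).const_mul _)]
  refine integral_mono_ae ((L2.integrable_mul_mul_of_bdd hw hbdd f g).const_mul _)
    (((hsq f).const_mul _).add ((hsq g).const_mul _)) ?_
  filter_upwards [hw0] with x hx
  exact two_mul_mul_mul_le hx ht

end Weighted

theorem L2.inner_eq_sum_integral_of_ae_eq_sum {I : Type*} [Fintype I] {φ : I → Ω → ℝ} {c : ℝ}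
    (hφ : ∀ i, AEStronglyMeasurable (φ i) μ) (hφbdd : ∀ i, ∀ᵐ x ∂μ, ‖φ i x‖ ≤ c)
    {g : Lp ℝ 2 μ} {h : I → Lp ℝ 2 μ}
    (hg : (g : Ω → ℝ) =ᵐ[μ] fun x => ∑ i, φ i x * (h i : Ω → ℝ) x) (u : Lp ℝ 2 μ) :
    ⟪g, u⟫ = ∑ i, ∫ x, φ i x * (h i : Ω → ℝ) x * (u : Ω → ℝ) x ∂μ := by
  rw [L2.real_inner_eq_integral_mul, ← integral_finsetSum _ fun i _ =>
    L2.integrable_mul_mul_of_bdd (hφ i) (hφbdd i) (h i) u]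
  refine integral_congr_ae ?_
  filter_upwards [hg] with x hx
  rw [hx, Finset.sum_mul]

end MeasureTheory

theorem stmt_7_general {Ω : Type*} [MeasurableSpace Ω] (μ : Measure Ω)
    {I : Type*} [Fintype I]
    (φ : I → Ω → ℝ) (hφmeas : ∀ i, Measurable (φ i))
    (hφ0 : ∀ i x, 0 ≤ φ i x) (hφ1 : ∀ i x, φ i x ≤ 1)
    (V' : I → Submodule ℝ (Lp ℝ 2 μ))
    (Ci : I → (Lp ℝ 2 μ →ₗ[ℝ] Lp ℝ 2 μ))
    (hCmem : ∀ i u, Ci i u ∈ V' i)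
    (hCproj : ∀ i (u : Lp ℝ 2 μ), ∀ w ∈ V' i,
      ∫ x, φ i x * (Ci i u : Ω → ℝ) x * (w : Ω → ℝ) x ∂μ
        = ∫ x, φ i x * (u : Ω → ℝ) x * (w : Ω → ℝ) x ∂μ)
    (C : Lp ℝ 2 μ → Lp ℝ 2 μ)
    (hC : ∀ u : Lp ℝ 2 μ,
      (C u : Ω → ℝ) =ᵐ[μ] fun x => ∑ i, φ i x * (Ci i u : Ω → ℝ) x)
    (V : Submodule ℝ (Lp ℝ 2 μ))
    (K₁ : ℝ) (hK₁ : 0 < K₁)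
    (D : I → V → Lp ℝ 2 μ)
    (hDmem : ∀ i (v : V), D i v ∈ V' i)
    (hdecomp : ∀ v : V,
      ((v : Lp ℝ 2 μ) : Ω → ℝ) =ᵐ[μ] fun x => ∑ i, φ i x * (D i v : Ω → ℝ) x)
    (hbound : ∀ v : V,
      ∑ i, ∫ x, φ i x * ((D i v : Ω → ℝ) x) ^ 2 ∂μ ≤ K₁ * ‖(v : Lp ℝ 2 μ)‖ ^ 2) :
    ∀ v : V, ‖(v : Lp ℝ 2 μ)‖ ^ 2 ≤ K₁ * ⟪C (v : Lp ℝ 2 μ), (v : Lp ℝ 2 μ)⟫ := by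
  have hφm i := (hφmeas i).aestronglyMeasurable (μ := μ)
  have hφbdd i : ∀ᵐ x ∂μ, ‖φ i x‖ ≤ 1 :=
    ae_of_all _ fun x => (Real.norm_of_nonneg (hφ0 i x)).trans_le (hφ1 i x)
  intro v
  have hnorm : ‖(v : Lp ℝ 2 μ)‖ ^ 2
      = ∑ i, ∫ x, φ i x * (Ci i v : Ω → ℝ) x * (D i v : Ω → ℝ) x ∂μ := by
    rw [← real_inner_self_eq_norm_sq, L2.inner_eq_sum_integral_of_ae_eq_sum hφm hφbdd (hdecomp v)]
    refine Finset.sum_congr rfl fun i _ => ?_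
    rw [integral_mul_mul_comm, hCproj i _ _ (hDmem i v)]
  have hCv : ⟪C v, v⟫ = ∑ i, ∫ x, φ i x * (Ci i v : Ω → ℝ) x ^ 2 ∂μ := by
    rw [L2.inner_eq_sum_integral_of_ae_eq_sum hφm hφbdd (hC v)]
    refine Finset.sum_congr rfl fun i _ => ?_
    rw [integral_mul_mul_comm, ← hCproj i _ _ (hCmem i v)]
    simp only [sq, mul_assoc]
  have hamgm : 2 * ‖(v : Lp ℝ 2 μ)‖ ^ 2 ≤ K₁ * ⟪C v, v⟫
      + K₁⁻¹ * ∑ i, ∫ x, φ i x * ((D i v : Ω → ℝ) x) ^ 2 ∂μ := by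
    rw [hnorm, hCv, Finset.mul_sum, Finset.mul_sum, Finset.mul_sum, ← Finset.sum_add_distrib]
    exact Finset.sum_le_sum fun i _ => L2.two_mul_integral_mul_mul_le (hφm i) (hφbdd i)
      (ae_of_all _ (hφ0 i)) hK₁ _ _
  have hD := mul_le_mul_of_nonneg_left (hbound v) (inv_nonneg.2 hK₁.le)
  rw [inv_mul_cancel_left₀ hK₁.ne'] at hD
  linarith

/-- Lower bound for the operator `C`.  Let `(φ_i)_{i∈I}` be a measurable
partition of unity with values in `[0,1]`, `C_i` the orthogonal projection onto the closed
subspace `V_i ⊆ L²(μ)` with respect to `⟨φ_i ·, ·⟩`, and `C u = ∑_i φ_i C_i u`.  If `V` is a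
subspace admitting decomposition operators `D_i : V → V_i` with `v = ∑_i φ_i D_i v` a.e. and
`∑_i ∫ φ_i |D_i v|² dμ ≤ K₁ ‖v‖₂²`, then `‖v‖₂² ≤ K₁ ⟨Cv, v⟩` for every `v ∈ V`. -/
theorem stmt_7 {Ω : Type*} [MeasurableSpace Ω] (μ : Measure Ω)
    {I : Type*} [Fintype I]
    (φ : I → Ω → ℝ) (hφmeas : ∀ i, Measurable (φ i))
    (hφ0 : ∀ i x, 0 ≤ φ i x) (hφ1 : ∀ i x, φ i x ≤ 1)
    (hφsum : ∀ᵐ x ∂μ, ∑ i, φ i x = 1)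
    (V' : I → Submodule ℝ (Lp ℝ 2 μ))
    (hVclosed : ∀ i, IsClosed (V' i : Set (Lp ℝ 2 μ)))
    (Ci : I → (Lp ℝ 2 μ →ₗ[ℝ] Lp ℝ 2 μ))
    (hCmem : ∀ i u, Ci i u ∈ V' i)
    (hCproj : ∀ i (u : Lp ℝ 2 μ), ∀ w ∈ V' i,
      ∫ x, φ i x * (Ci i u : Ω → ℝ) x * (w : Ω → ℝ) x ∂μ
        = ∫ x, φ i x * (u : Ω → ℝ) x * (w : Ω → ℝ) x ∂μ)
    (C : Lp ℝ 2 μ → Lp ℝ 2 μ)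
    (hC : ∀ u : Lp ℝ 2 μ,
      (C u : Ω → ℝ) =ᵐ[μ] fun x => ∑ i, φ i x * (Ci i u : Ω → ℝ) x)
    (V : Submodule ℝ (Lp ℝ 2 μ))
    (K₁ : ℝ) (hK₁ : 0 < K₁)
    (D : I → V → Lp ℝ 2 μ)
    (hDmem : ∀ i (v : V), D i v ∈ V' i)
    (hdecomp : ∀ v : V,
      ((v : Lp ℝ 2 μ) : Ω → ℝ) =ᵐ[μ] fun x => ∑ i, φ i x * (D i v : Ω → ℝ) x)
    (hbound : ∀ v : V,
      ∑ i, ∫ x, φ i x * ((D i v : Ω → ℝ) x) ^ 2 ∂μ ≤ K₁ * ‖(v : Lp ℝ 2 μ)‖ ^ 2) :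
    ∀ v : V, ‖(v : Lp ℝ 2 μ)‖ ^ 2 ≤ K₁ * ⟪C (v : Lp ℝ 2 μ), (v : Lp ℝ 2 μ)⟫ :=
  stmt_7_general μ φ hφmeas hφ0 hφ1 V' Ci hCmem hCproj C hC V K₁ hK₁ D hDmem hdecomp hbound
end

section
/- For every multi-index γ ∈ ℕ^{d+1} with k := |γ| ≤ K and every j ∈ {0,…,d}: X_j·D_j(X^γ·s^{K−k}) = (γ_j/K)·X^γ·s^{K−k} + ((K−k)/K)·X_j·X^γ·s^{K−k−1}, where for k = K the second summand is interpreted as 0. -/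
/-!
`D_j` is `∂_j / K` (on all polynomials, not only on homogeneous ones), so the identity is the
Leibniz rule for `X_j ∂_j` applied to `X^γ · s^{K-k}`, with `X_j ∂_j X^γ = γ_j X^γ` and
`∂_j s = 1`.
-/

open MvPolynomial

/-- The decomposition operator `D_j`, acting on a monomial `X^α` by
`D_j(X^α) = (α_j/K)·X^{α−e_j}` (which is `0` when `α_j = 0`) and extended linearly. -/
noncomputable def Dop (d K : ℕ) (j : Fin (d + 1))
    (p : MvPolynomial (Fin (d + 1)) ℝ) : MvPolynomial (Fin (d + 1)) ℝ :=
  ∑ α ∈ p.support,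
    MvPolynomial.monomial (α - Finsupp.single j 1) (((α j : ℝ) / (K : ℝ)) * p.coeff α)

lemma Dop_eq_inv_smul_pderiv (d K : ℕ) (j : Fin (d + 1)) (p : MvPolynomial (Fin (d + 1)) ℝ) :
    Dop d K j p = (K : ℝ)⁻¹ • pderiv j p := by
  conv_rhs => rw [p.as_sum]
  rw [map_sum, Dop, Finset.smul_sum]
  refine Finset.sum_congr rfl fun α _ => ?_
  rw [pderiv_monomial, smul_monomial, smul_eq_mul, mul_comm (coeff α p), ← mul_assoc,
    div_eq_inv_mul]

lemma pderiv_sum_X {σ R : Type*} [CommSemiring R] [Fintype σ] (j : σ) :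
    pderiv j (∑ i, X i : MvPolynomial σ R) = 1 := by
  classical
  simp [map_sum, pderiv_X, Pi.single_apply]

lemma X_mul_pderiv_monomial_mul_sum_X_pow {σ R : Type*} [CommSemiring R] [Fintype σ]
    (j : σ) (γ : σ →₀ ℕ) (n : ℕ) :
    X j * pderiv j (monomial γ (1 : R) * (∑ i, X i) ^ n)
      = γ j • (monomial γ 1 * (∑ i, X i) ^ n)
        + n • (X j * monomial γ 1 * (∑ i, X i) ^ (n - 1)) := by
  rw [Derivation.leibniz, Derivation.leibniz_pow, pderiv_sum_X]
  simp only [smul_eq_mul]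
  rw [mul_add, mul_left_comm (X j) ((∑ i, X i) ^ n), X_mul_pderiv_monomial]
  simp only [nsmul_eq_mul]
  ring

theorem stmt_8_general (d K : ℕ)
    (γ : Fin (d + 1) →₀ ℕ) (k : ℕ)
    (j : Fin (d + 1)) :
    (MvPolynomial.X j : MvPolynomial (Fin (d + 1)) ℝ)
        * Dop d K j (MvPolynomial.monomial γ 1 * (∑ i, MvPolynomial.X i) ^ (K - k))
      = ((γ j : ℝ) / (K : ℝ))
          • (MvPolynomial.monomial γ 1 * (∑ i, MvPolynomial.X i) ^ (K - k))
        + (((K - k : ℕ) : ℝ) / (K : ℝ))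
          • (MvPolynomial.X j * MvPolynomial.monomial γ 1
              * (∑ i, MvPolynomial.X i) ^ (K - k - 1)) := by
  rw [Dop_eq_inv_smul_pderiv, mul_smul_comm, X_mul_pderiv_monomial_mul_sum_X_pow,
    ← Nat.cast_smul_eq_nsmul ℝ, ← Nat.cast_smul_eq_nsmul ℝ, smul_add, smul_smul, smul_smul,
    div_eq_inv_mul, div_eq_inv_mul]

/-- Action of `D_j` on lower order monomials.  For every multi-index `γ`
with `k = |γ| ≤ K` and every `j`:
`X_j D_j(X^γ s^{K−k}) = (γ_j/K) X^γ s^{K−k} + ((K−k)/K) X_j X^γ s^{K−k−1}`. -/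
theorem stmt_8 (d K : ℕ) (hd : 1 ≤ d) (hK : 1 ≤ K)
    (γ : Fin (d + 1) →₀ ℕ) (k : ℕ) (hk : k = ∑ i, γ i) (hkK : k ≤ K)
    (j : Fin (d + 1)) :
    (MvPolynomial.X j : MvPolynomial (Fin (d + 1)) ℝ)
        * Dop d K j (MvPolynomial.monomial γ 1 * (∑ i, MvPolynomial.X i) ^ (K - k))
      = ((γ j : ℝ) / (K : ℝ))
          • (MvPolynomial.monomial γ 1 * (∑ i, MvPolynomial.X i) ^ (K - k))
        + (((K - k : ℕ) : ℝ) / (K : ℝ))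
          • (MvPolynomial.X j * MvPolynomial.monomial γ 1
              * (∑ i, MvPolynomial.X i) ^ (K - k - 1)) :=
  stmt_8_general d K γ k j
end

section
/- Assume d ≥ 2 and set ψ_j(x) := 1 − d·λ_j(x) for j = 0,…,d. Then for every (v_0,…,v_d) ∈ ℝ^{d+1}: ∑_{j=0}^{d} v_j²·∫_T ψ_j(x)² dx ≤ ((d²−d+2)/(d+2))·∫_T (∑_{j=0}^{d} v_j·ψ_j(x))² dx, and ∫_T (∑_{j=0}^{d} v_j·ψ_j(x))² dx ≤ (d²/(d²−d+2))·∑_{j=0}^{d} v_j²·∫_T ψ_j(x)² dx. -/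
/-! Everything reduces to the Gram matrix of the `ψ_j`. Slicing `T` at `x₀ = t` leaves a copy
of the `(d-1)`-simplex scaled by `1 - t`, on which the barycentric coordinates become `t` and
`(1 - t) λ(y)`; by induction on `d` this gives the Dirichlet formula
`∫_T ∏ λ_j ^ α_j = ∏ α_j! / (d + |α|)!`, hence `∫_T ψ_j ψ_k = (2 - d + d² δ_jk) / (d + 2)!`.
With `S₁ = ∑ v_j` and `S₂ = ∑ v_j²` the two sides become `((2 - d) S₁² + d² S₂) / (d + 2)!` and
`(d² - d + 2) S₂ / (d + 2)!`, so the first inequality is Cauchy–Schwarz `S₁² ≤ (d + 1) S₂` and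
the second is `(2 - d) S₁² ≤ 0`. -/

/-- The standard simplex `T = {x ∈ ℝ^d : x_i ≥ 0, ∑ x_i ≤ 1}`. -/
def Tset (d : ℕ) : Set (Fin d → ℝ) := {x | (∀ i, 0 ≤ x i) ∧ ∑ i, x i ≤ 1}

/-- The barycentric coordinates `λ(x) = (1 − ∑ x_i, x_1, …, x_d)`. -/
noncomputable def lam (d : ℕ) (x : Fin d → ℝ) : Fin (d + 1) → ℝ :=
  Fin.cons (1 - ∑ i, x i) x

open MeasureTheory Set Nat

theorem isClosed_Tset (d : ℕ) : IsClosed (Tset d) := by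
  have hsum : IsClosed {x : Fin d → ℝ | ∑ i, x i ≤ 1} := isClosed_le (by fun_prop) continuous_const
  refine IsClosed.inter (s₁ := {x : Fin d → ℝ | ∀ i, 0 ≤ x i}) ?_ hsum
  simp_rw [ofPred_forall]
  exact isClosed_iInter fun i => isClosed_le continuous_const (continuous_apply i)

theorem Tset_subset_Icc (d : ℕ) : Tset d ⊆ Icc 0 1 := fun _ ⟨hx, hs⟩ =>
  ⟨hx, fun i => (Finset.single_le_sum (fun j _ => hx j) (Finset.mem_univ i)).trans hs⟩

theorem isCompact_Tset (d : ℕ) : IsCompact (Tset d) :=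
  isCompact_Icc.of_isClosed_subset (isClosed_Tset d) (Tset_subset_Icc d)

theorem integrableOn_Tset {d : ℕ} {f : (Fin d → ℝ) → ℝ} (hf : Continuous f) :
    IntegrableOn f (Tset d) :=
  hf.continuousOn.integrableOn_compact (isCompact_Tset d)

theorem cons_smul_mem_Tset_iff {d : ℕ} {t : ℝ} (ht₀ : 0 ≤ t) (ht₁ : t < 1) (y : Fin d → ℝ) :
    (Fin.cons t ((1 - t) • y) : Fin (d + 1) → ℝ) ∈ Tset (d + 1) ↔ y ∈ Tset d := by
  have hc : 0 < 1 - t := by linarith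
  simp only [Tset, mem_ofPred_eq, Fin.forall_fin_succ, Fin.sum_univ_succ, Fin.cons_zero,
    Fin.cons_succ, Pi.smul_apply, smul_eq_mul, ← Finset.mul_sum, mul_nonneg_iff_of_pos_left hc,
    ht₀, true_and]
  refine and_congr_right fun _ => ⟨fun hs => ?_, fun hs => by nlinarith⟩
  exact le_of_mul_le_mul_left (by linarith) hc

theorem indicator_Tset_cons_eq_zero {d : ℕ} (F : (Fin (d + 1) → ℝ) → ℝ) {t : ℝ} (ht : t ∉ Icc 0 1)
    (y : Fin d → ℝ) : (Tset (d + 1)).indicator F (Fin.cons t y) = 0 :=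
  indicator_of_notMem (fun hx => ht ⟨(Tset_subset_Icc _ hx).1 0, (Tset_subset_Icc _ hx).2 0⟩) F

theorem integral_indicator_Tset_cons {d : ℕ} (F : (Fin (d + 1) → ℝ) → ℝ) {t : ℝ} (ht₀ : 0 ≤ t)
    (ht₁ : t < 1) :
    ∫ y, (Tset (d + 1)).indicator F (Fin.cons t y) =
      (1 - t) ^ d * ∫ y in Tset d, F (Fin.cons t ((1 - t) • y)) := by
  have hc : 0 < 1 - t := by linarith
  have hscale := Measure.integral_comp_smul volume
    (fun y => (Tset (d + 1)).indicator F (Fin.cons t y)) (1 - t)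
  have hslice : ∀ y : Fin d → ℝ, (Tset (d + 1)).indicator F (Fin.cons t ((1 - t) • y)) =
      (Tset d).indicator (fun y => F (Fin.cons t ((1 - t) • y))) y := fun y => by
    by_cases hy : y ∈ Tset d
    · rw [indicator_of_mem ((cons_smul_mem_Tset_iff ht₀ ht₁ y).2 hy), indicator_of_mem hy]
    · rw [indicator_of_notMem (mt (cons_smul_mem_Tset_iff ht₀ ht₁ y).1 hy), indicator_of_notMem hy]
  simp only [hslice, integral_indicator (isClosed_Tset d).measurableSet, Module.finrank_fin_fun,
    smul_eq_mul, abs_inv, abs_of_pos (pow_pos hc d)] at hscale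
  rw [hscale, mul_inv_cancel_left₀ (pow_pos hc d).ne']

theorem setIntegral_Tset_succ {d : ℕ} {F : (Fin (d + 1) → ℝ) → ℝ} (hF : Continuous F) :
    ∫ x in Tset (d + 1), F x =
      ∫ t in (0 : ℝ)..1, (1 - t) ^ d * ∫ y in Tset d, F (Fin.cons t ((1 - t) • y)) := by
  have he := (volume_preserving_piFinSuccAbove (fun _ : Fin (d + 1) => ℝ) 0).symm
  have hsymm : ∀ p : ℝ × (Fin d → ℝ),
      (MeasurableEquiv.piFinSuccAbove (fun _ : Fin (d + 1) => ℝ) 0).symm p = Fin.cons p.1 p.2 :=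
    fun p => by simp [MeasurableEquiv.piFinSuccAbove_symm_apply, Fin.consEquiv]
  have hG : Integrable (fun p : ℝ × (Fin d → ℝ) => (Tset (d + 1)).indicator F (Fin.cons p.1 p.2))
      (volume.prod volume) := by
    simp_rw [← hsymm]
    exact (he.integrable_comp_emb (MeasurableEquiv.measurableEmbedding _)).2
      ((integrableOn_Tset hF).integrable_indicator (isClosed_Tset _).measurableSet)
  have hfiber : ∀ t ∉ Icc (0 : ℝ) 1, ∫ y, (Tset (d + 1)).indicator F (Fin.cons t y) = 0 :=
    fun t ht => by simp [indicator_Tset_cons_eq_zero F ht]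
  have hIco : EqOn (fun t => ∫ y, (Tset (d + 1)).indicator F (Fin.cons t y))
      (fun t => (1 - t) ^ d * ∫ y in Tset d, F (Fin.cons t ((1 - t) • y))) (Ico 0 1) :=
    fun t ht => integral_indicator_Tset_cons F ht.1 ht.2
  calc ∫ x in Tset (d + 1), F x
      = ∫ p : ℝ × (Fin d → ℝ), (Tset (d + 1)).indicator F (Fin.cons p.1 p.2) := by
        rw [← integral_indicator (isClosed_Tset _).measurableSet,
          ← he.integral_comp (MeasurableEquiv.measurableEmbedding _)]
        simp_rw [hsymm]
    _ = ∫ t, ∫ y, (Tset (d + 1)).indicator F (Fin.cons t y) := by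
        rw [Measure.volume_eq_prod]; exact integral_prod _ hG
    _ = ∫ t in Ico 0 1, ∫ y, (Tset (d + 1)).indicator F (Fin.cons t y) := by
        rw [← setIntegral_eq_integral_of_forall_compl_eq_zero hfiber, integral_Icc_eq_integral_Ico]
    _ = _ := by
        rw [setIntegral_congr_fun measurableSet_Ico hIco, integral_Ico_eq_integral_Ioc,
          intervalIntegral.integral_of_le zero_le_one]

theorem integral_one_sub_pow (m : ℕ) : ∫ t in (0 : ℝ)..1, (1 - t) ^ m = 1 / (m + 1) := by
  simp [intervalIntegral.integral_comp_sub_left (fun u : ℝ => u ^ m) 1]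

theorem integral_pow_succ_mul_one_sub_pow (k m : ℕ) :
    ∫ t in (0 : ℝ)..1, t ^ (k + 1) * (1 - t) ^ m =
      (k + 1) / (m + 1) * ∫ t in (0 : ℝ)..1, t ^ k * (1 - t) ^ (m + 1) := by
  have hu : ∀ t ∈ uIcc (0 : ℝ) 1, HasDerivAt (fun t => t ^ (k + 1)) ((k + 1) * t ^ k) t :=
    fun t _ => by simpa using hasDerivAt_pow (k + 1) t
  have hv : ∀ t ∈ uIcc (0 : ℝ) 1,
      HasDerivAt (fun t : ℝ => -1 / (m + 1) * (1 - t) ^ (m + 1)) ((1 - t) ^ m) t := fun t _ => by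
    refine ((((hasDerivAt_id' t).const_sub 1).pow (m + 1)).const_mul
      (-1 / ((m : ℝ) + 1))).congr_deriv ?_
    push_cast
    field_simp
  rw [intervalIntegral.integral_mul_deriv_eq_deriv_mul hu hv
      (Continuous.intervalIntegrable (by fun_prop) _ _)
      (Continuous.intervalIntegrable (by fun_prop) _ _),
    ← intervalIntegral.integral_const_mul]
  simp only [sub_self, zero_pow (succ_ne_zero _), mul_zero, zero_mul, zero_sub,
    ← intervalIntegral.integral_neg]
  congr 1 with t
  field_simp

theorem integral_pow_mul_one_sub_pow (k m : ℕ) :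
    ∫ t in (0 : ℝ)..1, t ^ k * (1 - t) ^ m = (k ! * m ! : ℝ) / (k + m + 1)! := by
  induction k generalizing m with
  | zero =>
    simp only [pow_zero, one_mul, integral_one_sub_pow, factorial_zero, zero_add,
      factorial_succ m, cast_mul, cast_one]
    field_simp
    push_cast
    ring
  | succ k ih =>
    rw [integral_pow_succ_mul_one_sub_pow, ih, show k + (m + 1) + 1 = k + 1 + m + 1 by ring,
      factorial_succ k, factorial_succ m]
    push_cast
    field_simp

@[fun_prop]
theorem continuous_lam (d : ℕ) : Continuous (lam d) :=
  Continuous.finCons (by fun_prop) continuous_id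

theorem lam_cons_smul_one {d : ℕ} (t : ℝ) (y : Fin d → ℝ) :
    lam (d + 1) (Fin.cons t ((1 - t) • y)) 1 = t :=
  rfl

theorem lam_cons_smul_succAbove_one {d : ℕ} (t : ℝ) (y : Fin d → ℝ) (i : Fin (d + 1)) :
    lam (d + 1) (Fin.cons t ((1 - t) • y)) (Fin.succAbove 1 i) = (1 - t) * lam d y i := by
  cases i using Fin.cases with
  | zero =>
    simp only [lam, Fin.sum_univ_succ, Fin.cons_zero, Fin.cons_succ, Pi.smul_apply, smul_eq_mul,
      ← Finset.mul_sum, Fin.succAbove_ne_zero_zero one_ne_zero]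
    ring
  | succ k => simp [lam, Fin.one_succAbove_succ]

theorem prod_lam_cons_smul_pow {d : ℕ} (α : Fin (d + 2) → ℕ) (t : ℝ) (y : Fin d → ℝ) :
    ∏ j, lam (d + 1) (Fin.cons t ((1 - t) • y)) j ^ α j =
      t ^ α 1 * (1 - t) ^ (∑ i, α (Fin.succAbove 1 i)) *
        ∏ i, lam d y i ^ α (Fin.succAbove 1 i) := by
  rw [Fin.prod_univ_succAbove _ 1]
  simp only [lam_cons_smul_one, lam_cons_smul_succAbove_one, mul_pow, Finset.prod_mul_distrib,
    Finset.prod_pow_eq_pow_sum, mul_assoc]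

theorem integral_prod_lam_pow (d : ℕ) (α : Fin (d + 1) → ℕ) :
    ∫ x in Tset d, ∏ j, lam d x j ^ α j = (∏ j, (α j)! : ℝ) / (d + ∑ j, α j)! := by
  induction d with
  | zero =>
    simp [Tset, lam, Measure.real, volume_pi, (factorial_pos _).ne']
  | succ d ih =>
    set α' : Fin (d + 1) → ℕ := fun i => α (Fin.succAbove 1 i)
    have hint : ∀ t : ℝ,
        (1 - t) ^ d * ∫ y in Tset d, ∏ j, lam (d + 1) (Fin.cons t ((1 - t) • y)) j ^ α j =
          t ^ α 1 * (1 - t) ^ (d + ∑ i, α' i) * ((∏ i, (α' i)! : ℝ) / (d + ∑ i, α' i)!) :=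
      fun t => by
        simp_rw [prod_lam_cons_smul_pow, integral_const_mul, ih]
        ring
    rw [setIntegral_Tset_succ (by fun_prop)]
    simp_rw [hint]
    rw [intervalIntegral.integral_mul_const, integral_pow_mul_one_sub_pow,
      Fin.prod_univ_succAbove (fun j => ((α j)! : ℝ)) 1, Fin.sum_univ_succAbove α 1,
      show α 1 + (d + ∑ i, α' i) + 1 = d + 1 + (α 1 + ∑ i, α' i) by ring]
    field_simp
    exact mul_comm _ _

theorem Finset.prod_pow_pi_single {ι M : Type*} [Fintype ι] [DecidableEq ι] [CommMonoid M]
    (f : ι → M) (j : ι) (n : ℕ) : ∏ i, f i ^ (Pi.single j n : ι → ℕ) i = f j ^ n := by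
  rw [Finset.prod_eq_single j (fun i _ hi => by rw [Pi.single_eq_of_ne hi, pow_zero]) (by simp),
    Pi.single_eq_same]

theorem Finset.prod_factorial_pi_single {ι : Type*} [Fintype ι] [DecidableEq ι] (j : ι) (n : ℕ) :
    ∏ i, ((Pi.single j n : ι → ℕ) i)! = n ! := by
  rw [Finset.prod_eq_single j (fun i _ hi => by rw [Pi.single_eq_of_ne hi, factorial_zero])
    (by simp), Pi.single_eq_same]

theorem integral_Tset_one (d : ℕ) : ∫ _ in Tset d, (1 : ℝ) = 1 / d ! := by
  simpa using integral_prod_lam_pow d 0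

theorem integral_lam (d : ℕ) (j : Fin (d + 1)) :
    ∫ x in Tset d, lam d x j = 1 / (d + 1)! := by
  simpa [Finset.prod_pow_pi_single, ← Nat.cast_prod, Finset.prod_factorial_pi_single]
    using integral_prod_lam_pow d (Pi.single j 1)

theorem integral_lam_mul_lam (d : ℕ) (j k : Fin (d + 1)) :
    ∫ x in Tset d, lam d x j * lam d x k = (if j = k then 2 else 1) / (d + 2)! := by
  rcases eq_or_ne j k with rfl | hjk
  · simpa [Finset.prod_pow_pi_single, ← Nat.cast_prod, Finset.prod_factorial_pi_single, ← sq]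
      using integral_prod_lam_pow d (Pi.single j 2)
  · have hfact : ∏ i, (((Pi.single j 1 + Pi.single k 1 : Fin (d + 1) → ℕ) i)! : ℝ) = 1 :=
      Finset.prod_eq_one fun i _ => by
        rw [Nat.cast_eq_one, factorial_eq_one]
        by_cases hi : i = j <;> simp [Pi.single_apply, hi, hjk, ite_le_one]
    have h := integral_prod_lam_pow d (Pi.single j 1 + Pi.single k 1)
    rw [hfact] at h
    simpa [pow_add, Finset.prod_mul_distrib, hjk, Finset.sum_add_distrib,
      Finset.prod_pow_pi_single] using h

/-- The Crouzeix–Raviart basis function `ψ_j`. -/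
noncomputable def crBasis (d : ℕ) (x : Fin d → ℝ) (j : Fin (d + 1)) : ℝ :=
  1 - d * lam d x j

@[fun_prop]
theorem continuous_crBasis (d : ℕ) (j : Fin (d + 1)) : Continuous fun x => crBasis d x j := by
  unfold crBasis
  fun_prop

theorem integral_crBasis_mul_crBasis (d : ℕ) (j k : Fin (d + 1)) :
    ∫ x in Tset d, crBasis d x j * crBasis d x k =
      (2 - d + if j = k then (d : ℝ) ^ 2 else 0) / (d + 2)! := by
  have hexpand : ∀ x, crBasis d x j * crBasis d x k =
      1 - d * lam d x j - d * lam d x k + d ^ 2 * (lam d x j * lam d x k) := fun x => by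
    unfold crBasis
    ring
  simp_rw [hexpand]
  rw [integral_add (integrableOn_Tset (by fun_prop)) (integrableOn_Tset (by fun_prop)),
    integral_sub (integrableOn_Tset (by fun_prop)) (integrableOn_Tset (by fun_prop)),
    integral_sub (integrableOn_Tset (by fun_prop)) (integrableOn_Tset (by fun_prop)),
    integral_const_mul, integral_const_mul, integral_const_mul, integral_Tset_one,
    integral_lam, integral_lam, integral_lam_mul_lam, factorial_succ (d + 1), factorial_succ d]
  push_cast
  split_ifs <;> field_simp <;> ring

theorem integral_sq_sum_mul {α ι : Type*} [MeasurableSpace α] {μ : Measure α} [Fintype ι]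
    (f : ι → α → ℝ) (v : ι → ℝ) (hf : ∀ j k, Integrable (fun x => f j x * f k x) μ) :
    ∫ x, (∑ j, v j * f j x) ^ 2 ∂μ = ∑ j, ∑ k, v j * v k * ∫ x, f j x * f k x ∂μ := by
  have hexpand : ∀ x, (∑ j, v j * f j x) ^ 2 = ∑ j, ∑ k, v j * v k * (f j x * f k x) := fun x => by
    rw [sq, Finset.sum_mul_sum]
    exact Finset.sum_congr rfl fun j _ => Finset.sum_congr rfl fun k _ => by ring
  simp_rw [hexpand]
  rw [integral_finsetSum _ fun j _ => integrable_finsetSum _ fun k _ => (hf j k).const_mul _]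
  refine Finset.sum_congr rfl fun j _ => ?_
  rw [integral_finsetSum _ fun k _ => (hf j k).const_mul _]
  simp_rw [integral_const_mul]

theorem integral_sq_sum_mul_crBasis (d : ℕ) (v : Fin (d + 1) → ℝ) :
    ∫ x in Tset d, (∑ j, v j * crBasis d x j) ^ 2 =
      ((2 - d) * (∑ j, v j) ^ 2 + d ^ 2 * ∑ j, v j ^ 2) / (d + 2)! := by
  rw [integral_sq_sum_mul _ v fun j k => integrableOn_Tset (by fun_prop)]
  have hterm : ∀ j k, v j * v k * ((2 - d + if j = k then (d : ℝ) ^ 2 else 0) / (d + 2)!) =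
      (2 - d) / (d + 2)! * (v j * v k) + if j = k then d ^ 2 / (d + 2)! * v j ^ 2 else 0 :=
    fun j k => by split_ifs with h <;> [subst h; skip] <;> ring
  simp only [integral_crBasis_mul_crBasis, hterm, Finset.sum_add_distrib, Finset.sum_ite_eq,
    Finset.mem_univ, if_true, ← Finset.mul_sum]
  rw [← Finset.sum_mul, ← sq]
  ring

theorem sum_sq_mul_integral_crBasis_sq (d : ℕ) (v : Fin (d + 1) → ℝ) :
    ∑ j, v j ^ 2 * ∫ x in Tset d, crBasis d x j ^ 2 =
      (d ^ 2 - d + 2) * (∑ j, v j ^ 2) / (d + 2)! := by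
  have hsq : ∀ j, ∫ x in Tset d, crBasis d x j ^ 2 = ((d : ℝ) ^ 2 - d + 2) / (d + 2)! :=
    fun j => by
      simp only [sq (crBasis d _ j), integral_crBasis_mul_crBasis, if_true]
      ring
  simp only [hsq, ← Finset.sum_mul]
  ring

/-- Local norm equivalence for Crouzeix–Raviart basis functions.  Let
`d ≥ 2` and `ψ_j = 1 − d λ_j`.  Then for every `(v_0,…,v_d) ∈ ℝ^{d+1}`:
`∑_j v_j² ∫_T ψ_j² dx ≤ ((d²−d+2)/(d+2)) ∫_T (∑_j v_j ψ_j)² dx` and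
`∫_T (∑_j v_j ψ_j)² dx ≤ (d²/(d²−d+2)) ∑_j v_j² ∫_T ψ_j² dx`. -/
theorem stmt_15 (d : ℕ) (hd : 2 ≤ d) (v : Fin (d + 1) → ℝ) :
    (∑ j, (v j) ^ 2 * ∫ x in Tset d, (1 - (d : ℝ) * lam d x j) ^ 2)
        ≤ (((d : ℝ) ^ 2 - (d : ℝ) + 2) / ((d : ℝ) + 2))
          * ∫ x in Tset d, (∑ j, v j * (1 - (d : ℝ) * lam d x j)) ^ 2 ∧
    (∫ x in Tset d, (∑ j, v j * (1 - (d : ℝ) * lam d x j)) ^ 2)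
        ≤ ((d : ℝ) ^ 2 / ((d : ℝ) ^ 2 - (d : ℝ) + 2))
          * ∑ j, (v j) ^ 2 * ∫ x in Tset d, (1 - (d : ℝ) * lam d x j) ^ 2 := by
  have hd₂ : (2 : ℝ) ≤ d := by exact_mod_cast hd
  have hCS : (∑ j, v j) ^ 2 ≤ (d + 1) * ∑ j, v j ^ 2 := by
    simpa using sq_sum_le_card_mul_sum_sq (s := Finset.univ) (f := v)
  simp only [← crBasis.eq_1]
  rw [integral_sq_sum_mul_crBasis, sum_sq_mul_integral_crBasis_sq]
  set S₁ := ∑ j, v j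
  set S₂ := ∑ j, v j ^ 2
  have hN : (0 : ℝ) < (d + 2)! := by exact_mod_cast factorial_pos _
  have hc : (0 : ℝ) < d ^ 2 - d + 2 := by nlinarith
  constructor
  · rw [← sub_nonneg, show (d ^ 2 - d + 2) / (d + 2) * (((2 - d) * S₁ ^ 2 + d ^ 2 * S₂) / (d + 2)!)
        - (d ^ 2 - d + 2) * S₂ / (d + 2)!
        = (d ^ 2 - d + 2) / ((d + 2) * (d + 2)!) * ((d - 2) * ((d + 1) * S₂ - S₁ ^ 2)) by
      field_simp; ring]
    exact mul_nonneg (div_nonneg hc.le (by positivity)) (mul_nonneg (by linarith) (by linarith))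
  · rw [← sub_nonneg, show (d : ℝ) ^ 2 / (d ^ 2 - d + 2) * ((d ^ 2 - d + 2) * S₂ / (d + 2)!)
        - ((2 - d) * S₁ ^ 2 + d ^ 2 * S₂) / (d + 2)! = (d - 2) * S₁ ^ 2 / (d + 2)! by
      rw [mul_div_assoc, ← mul_assoc, div_mul_cancel₀ _ hc.ne']
      ring]
    exact div_nonneg (mul_nonneg (by linarith) (sq_nonneg _)) hN.le
end

section
/- Let K₁, K₂ > 0 be reals such that for every family of reals (v_f)_{f∈F}: ∑_{f∈F} ‖v_f·ψ_f‖² ≤ K₁·‖∑_{f∈F} v_f·ψ_f‖² and ‖∑_{f∈F} v_f·ψ_f‖² ≤ K₂·∑_{f∈F} ‖v_f·ψ_f‖². Then ‖v‖² ≤ K₁·⟨Cv, v⟩ for every v in the linear span of (ψ_f)_{f∈F}, and ‖Cu‖ ≤ K₂·‖u‖ for every u ∈ H. -/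
/-! `C` is the sum of the orthogonal projections `P_f` onto the lines `ℝ ∙ ψ_f`, so
`⟪C u, u⟫ = ∑ ‖P_f u‖²`. Writing `v = ∑ w_f` with `w_f ∈ ℝ ∙ ψ_f`, we get
`‖v‖² = ∑ ⟪w_f, P_f v⟫`, and Cauchy–Schwarz together with the first hypothesis gives
`‖v‖⁴ ≤ K₁ ‖v‖² ⟪C v, v⟫`. Since `P_f u` is again a multiple of `ψ_f`, the second hypothesis
gives `‖C u‖² ≤ K₂ ⟪C u, u⟫ ≤ K₂ ‖C u‖ ‖u‖`. -/

open RealInnerProductSpace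

namespace Submodule

variable {H : Type*} [NormedAddCommGroup H] [InnerProductSpace ℝ H]

theorem real_inner_starProjection_of_mem (K : Submodule ℝ H) [K.HasOrthogonalProjection]
    {w : H} (hw : w ∈ K) (u : H) : ⟪w, K.starProjection u⟫ = ⟪w, u⟫ := by
  rw [← inner_starProjection_left_eq_right, starProjection_eq_self_iff.2 hw]

theorem real_inner_starProjection_self (K : Submodule ℝ H) [K.HasOrthogonalProjection]
    (u : H) : ⟪K.starProjection u, u⟫ = ‖K.starProjection u‖ ^ 2 := by
  rw [← real_inner_self_eq_norm_sq,
    K.real_inner_starProjection_of_mem (K.starProjection_apply_mem u)]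

theorem starProjection_span_singleton_real (ψ u : H) :
    (ℝ ∙ ψ).starProjection u = (⟪u, ψ⟫ / ‖ψ‖ ^ 2) • ψ := by
  rw [starProjection_singleton, real_inner_comm]
  rfl

end Submodule

theorem Finset.sq_sum_inner_le {ι H : Type*} [NormedAddCommGroup H] [InnerProductSpace ℝ H]
    (s : Finset ι) (a b : ι → H) :
    (∑ i ∈ s, ⟪a i, b i⟫) ^ 2 ≤ (∑ i ∈ s, ‖a i‖ ^ 2) * ∑ i ∈ s, ‖b i‖ ^ 2 := by
  calc (∑ i ∈ s, ⟪a i, b i⟫) ^ 2 ≤ (∑ i ∈ s, ‖a i‖ * ‖b i‖) ^ 2 := by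
        rw [← sq_abs]
        gcongr
        exact (abs_sum_le_sum_abs _ _).trans (sum_le_sum fun i _ => abs_real_inner_le_norm _ _)
    _ ≤ _ := Finset.sum_mul_sq_le_sq_mul_sq s _ _

section

variable {H F : Type*} [NormedAddCommGroup H] [InnerProductSpace ℝ H] [Fintype F]
  (K : F → Submodule ℝ H) [∀ f, (K f).HasOrthogonalProjection]

theorem real_inner_sum_starProjection_self (u : H) :
    ⟪∑ f, (K f).starProjection u, u⟫ = ∑ f, ‖(K f).starProjection u‖ ^ 2 := by
  simp only [sum_inner, Submodule.real_inner_starProjection_self]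

theorem norm_sq_le_mul_real_inner_sum_starProjection {w : F → H} (hw : ∀ f, w f ∈ K f) {c : ℝ}
    (hc : ∑ f, ‖w f‖ ^ 2 ≤ c * ‖∑ f, w f‖ ^ 2) :
    ‖∑ f, w f‖ ^ 2 ≤ c * ⟪∑ f, (K f).starProjection (∑ f, w f), ∑ f, w f⟫ := by
  set v := ∑ f, w f
  rw [real_inner_sum_starProjection_self]
  have hv : ‖v‖ ^ 2 = ∑ f, ⟪w f, (K f).starProjection v⟫ := by
    simp only [(K _).real_inner_starProjection_of_mem (hw _), ← sum_inner, v,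
      real_inner_self_eq_norm_sq]
  have key : ‖v‖ ^ 2 * ‖v‖ ^ 2 ≤ ‖v‖ ^ 2 * (c * ∑ f, ‖(K f).starProjection v‖ ^ 2) :=
    calc ‖v‖ ^ 2 * ‖v‖ ^ 2 = (∑ f, ⟪w f, (K f).starProjection v⟫) ^ 2 := by rw [← sq, hv]
      _ ≤ (∑ f, ‖w f‖ ^ 2) * ∑ f, ‖(K f).starProjection v‖ ^ 2 :=
          Finset.sq_sum_inner_le _ _ _
      _ ≤ c * ‖v‖ ^ 2 * ∑ f, ‖(K f).starProjection v‖ ^ 2 := by gcongr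
      _ = _ := by ring
  rcases (sq_nonneg ‖v‖).eq_or_lt with h0 | h0
  · have hv0 : v = 0 := by simpa using h0.symm
    simp [hv0]
  · exact le_of_mul_le_mul_left key h0

theorem norm_sum_starProjection_le {c : ℝ} (hc0 : 0 ≤ c) (u : H)
    (hc : ‖∑ f, (K f).starProjection u‖ ^ 2 ≤ c * ∑ f, ‖(K f).starProjection u‖ ^ 2) :
    ‖∑ f, (K f).starProjection u‖ ≤ c * ‖u‖ := by
  set w := ∑ f, (K f).starProjection u
  have key : ‖w‖ * ‖w‖ ≤ ‖w‖ * (c * ‖u‖) :=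
    calc ‖w‖ * ‖w‖ ≤ c * ⟪w, u⟫ := by
          rw [← sq, real_inner_sum_starProjection_self]; exact hc
      _ ≤ c * (‖w‖ * ‖u‖) := by gcongr; exact real_inner_le_norm _ _
      _ = _ := by ring
  rcases (norm_nonneg w).eq_or_lt with h0 | h0
  · rw [← h0]; positivity
  · exact le_of_mul_le_mul_left key h0

end

theorem stmt_16_general {H : Type*} [NormedAddCommGroup H] [InnerProductSpace ℝ H]
    {F : Type*} [Fintype F] (ψ : F → H)
    (K₁ K₂ : ℝ) (hK₂ : 0 < K₂)
    (h1 : ∀ v : F → ℝ, ∑ f, ‖v f • ψ f‖ ^ 2 ≤ K₁ * ‖∑ f, v f • ψ f‖ ^ 2)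
    (h2 : ∀ v : F → ℝ, ‖∑ f, v f • ψ f‖ ^ 2 ≤ K₂ * ∑ f, ‖v f • ψ f‖ ^ 2) :
    (∀ v ∈ Submodule.span ℝ (Set.range ψ),
      ‖v‖ ^ 2 ≤ K₁ * ⟪∑ f, (⟪v, ψ f⟫ / ‖ψ f‖ ^ 2) • ψ f, v⟫) ∧
    (∀ u : H, ‖∑ f, (⟪u, ψ f⟫ / ‖ψ f‖ ^ 2) • ψ f‖ ≤ K₂ * ‖u‖) := by
  simp_rw [← Submodule.starProjection_span_singleton_real]
  refine ⟨fun v hv => ?_, fun u => ?_⟩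
  · obtain ⟨c, rfl⟩ := (Submodule.mem_span_range_iff_exists_fun ℝ).1 hv
    exact norm_sq_le_mul_real_inner_sum_starProjection _
      (fun f => Submodule.smul_mem _ _ (Submodule.mem_span_singleton_self _)) (h1 c)
  · refine norm_sum_starProjection_le _ hK₂.le u ?_
    simpa only [Submodule.starProjection_span_singleton_real] using
      h2 fun f => ⟪u, ψ f⟫ / ‖ψ f‖ ^ 2

/-- Eigenvalue bounds for the Crouzeix–Raviart operator `C`.  Let `H` be
a real inner product space, `(ψ_f)_{f∈F}` a finite family of nonzero vectors and
`C u = ∑_f (⟨u, ψ_f⟩/‖ψ_f‖²) ψ_f`.  If `K₁, K₂ > 0` satisfy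
`∑_f ‖v_f ψ_f‖² ≤ K₁ ‖∑_f v_f ψ_f‖²` and `‖∑_f v_f ψ_f‖² ≤ K₂ ∑_f ‖v_f ψ_f‖²` for all
`(v_f)`, then `‖v‖² ≤ K₁ ⟨Cv, v⟩` on the span of the `ψ_f` and `‖Cu‖ ≤ K₂ ‖u‖` on `H`. -/
theorem stmt_16 {H : Type*} [NormedAddCommGroup H] [InnerProductSpace ℝ H]
    {F : Type*} [Fintype F] (ψ : F → H) (hψ : ∀ f, ψ f ≠ 0)
    (K₁ K₂ : ℝ) (hK₁ : 0 < K₁) (hK₂ : 0 < K₂)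
    (h1 : ∀ v : F → ℝ, ∑ f, ‖v f • ψ f‖ ^ 2 ≤ K₁ * ‖∑ f, v f • ψ f‖ ^ 2)
    (h2 : ∀ v : F → ℝ, ‖∑ f, v f • ψ f‖ ^ 2 ≤ K₂ * ∑ f, ‖v f • ψ f‖ ^ 2) :
    (∀ v ∈ Submodule.span ℝ (Set.range ψ),
      ‖v‖ ^ 2 ≤ K₁ * ⟪∑ f, (⟪v, ψ f⟫ / ‖ψ f‖ ^ 2) • ψ f, v⟫) ∧
    (∀ u : H, ‖∑ f, (⟪u, ψ f⟫ / ‖ψ f‖ ^ 2) • ψ f‖ ≤ K₂ * ‖u‖) :=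
  stmt_16_general ψ K₁ K₂ hK₂ h1 h2
end
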